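/- arXiv:1802.07336 — 7 statements merged into one kernel-verified Lean document; each statement's English description precedes it below -/
import Mathlib

section
/- Let m > n ≥ 1 be positive integers. The absolute value of the resultant of the cyclotomic polynomials Φ_n and Φ_m equals p^{φ(n)} if m = n·p^α for some prime p and integer α ≥ 1, and equals 1 otherwise. -/
/-!
For the primitive `m`-th roots of unity `ζ` put `A(d) = ∏_ζ |Φ_d(ζ)|`. Since
`∏_{d ∣ n} Φ_d = X^n - 1`, we get `∏_{d ∣ n} A(d) = ∏_ζ |ζ^n - 1|`. As `ζ` runs over the primitive
`m`-th roots, `ζ^n` runs `φ(m)/φ(M)` times over the primitive `M`-th roots, `M = m / gcd(m, n)`,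
so this product is `|Φ_M(1)|^(φ(m)/φ(M)) = exp(Λ(M) φ(m)/φ(M))`. An elementary computation with
the `p`-part of `gcd(m, n)` shows that the claimed values `exp(Λ(m/d) φ(d))` (for `d ∣ m`, and `1`
otherwise) have the same divisor products, so by induction over divisors they agree with `A(d)`
for `1 ≤ d < m`.
-/

open Polynomial Finset
open scoped Nat

theorem MonoidHom.prod_comp_of_surjective {G H β : Type*} [Group G] [Group H] [Fintype G]
    [Fintype H] [CommMonoid β] {f : G →* H} (hf : Function.Surjective f) (F : H → β) :
    ∏ g, F (f g) = (∏ h, F h) ^ (Fintype.card G / Fintype.card H) := by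
  classical
  have hfiber (h : H) : #{g | f g = h} = #{g | f g = 1} :=
    MonoidHom.card_fiber_eq_of_mem_range f (hf h) ⟨1, map_one f⟩
  have hcard : Fintype.card G = Fintype.card H * #{g | f g = 1} := by
    rw [← card_univ, card_eq_sum_card_fiberwise (f := f) (t := univ) (fun _ _ ↦ mem_univ _)]
    simp [hfiber]
  rw [hcard, Nat.mul_div_cancel_left _ Fintype.card_pos, Finset.prod_comp,
    image_univ_of_surjective hf, ← prod_pow]
  simp_rw [hfiber]

theorem IsPrimitiveRoot.prod_primitiveRoots_eq_prod_units {R β : Type*} [CommRing R] [IsDomain R]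
    [CommMonoid β] {m : ℕ} [NeZero m] {ζ : R} (hζ : IsPrimitiveRoot ζ m) (f : R → β) :
    ∏ ξ ∈ primitiveRoots m R, f ξ = ∏ u : (ZMod m)ˣ, f (ζ ^ (u : ZMod m).val) := by
  have hm : 0 < m := NeZero.pos m
  symm
  refine prod_nbij (fun u ↦ ζ ^ (u : ZMod m).val) (fun u _ ↦ ?_) (fun u _ v _ huv ↦ ?_)
    (fun ξ hξ ↦ ?_) (fun _ _ ↦ rfl)
  · exact (mem_primitiveRoots hm).2 (hζ.pow_of_coprime _ (ZMod.val_coe_unit_coprime u))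
  · exact Units.ext (ZMod.val_injective m (hζ.pow_inj (ZMod.val_lt _) (ZMod.val_lt _) huv))
  · obtain ⟨i, hi, hco, rfl⟩ := hζ.isPrimitiveRoot_iff.1 ((mem_primitiveRoots hm).1 hξ)
    exact ⟨ZMod.unitOfCoprime i hco, mem_coe.2 (mem_univ _), by
      simp [ZMod.val_natCast, Nat.mod_eq_of_lt hi]⟩

theorem IsPrimitiveRoot.prod_primitiveRoots_comp_pow {R β : Type*} [CommRing R] [IsDomain R]
    [CommMonoid β] {m : ℕ} [NeZero m] {ζ : R} (hζ : IsPrimitiveRoot ζ m) (n : ℕ) (f : R → β) :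
    ∏ ξ ∈ primitiveRoots m R, f (ξ ^ n) =
      (∏ ξ ∈ primitiveRoots (m / m.gcd n) R, f ξ) ^ (φ m / φ (m / m.gcd n)) := by
  set g := m.gcd n
  set M := m / g
  have hg : 0 < g := Nat.gcd_pos_of_pos_left n (NeZero.pos m)
  have hmM : m = g * M := (Nat.mul_div_cancel' (Nat.gcd_dvd_left m n)).symm
  have hnn' : n = g * (n / g) := (Nat.mul_div_cancel' (Nat.gcd_dvd_right m n)).symm
  have hMm : M ∣ m := Dvd.intro_left g hmM.symm
  have : NeZero M := ⟨fun h ↦ NeZero.ne m (by rw [hmM, h, mul_zero])⟩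
  have hξ : IsPrimitiveRoot (ζ ^ g) M := hζ.pow (NeZero.pos m) hmM
  let c : (ZMod M)ˣ := ZMod.unitOfCoprime (n / g) (Nat.coprime_div_gcd_div_gcd hg).symm
  have hpow (u : (ZMod m)ˣ) :
      (ζ ^ (u : ZMod m).val) ^ n =
        (ζ ^ g) ^ ((ZMod.unitsMap hMm u * c : (ZMod M)ˣ) : ZMod M).val := by
    rw [← pow_mul, hnn', show (u : ZMod m).val * (g * (n / g)) = g * ((u : ZMod m).val * (n / g))
      by ring, pow_mul]
    refine pow_eq_pow_of_modEq ?_ hξ.pow_eq_one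
    rw [← ZMod.natCast_eq_natCast_iff, ZMod.natCast_zmod_val]
    push_cast
    rw [ZMod.natCast_val, ZMod.coe_unitOfCoprime]
    rfl
  calc ∏ ξ ∈ primitiveRoots m R, f (ξ ^ n)
      = ∏ u : (ZMod m)ˣ, f ((ζ ^ g) ^ ((ZMod.unitsMap hMm u * c : (ZMod M)ˣ) : ZMod M).val) := by
        simp_rw [hζ.prod_primitiveRoots_eq_prod_units (fun ξ ↦ f (ξ ^ n)), hpow]
    _ = (∏ v : (ZMod M)ˣ, f ((ζ ^ g) ^ ((v * c : (ZMod M)ˣ) : ZMod M).val)) ^ (φ m / φ M) := by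
        rw [MonoidHom.prod_comp_of_surjective (ZMod.unitsMap_surjective hMm)
          (fun v ↦ f ((ζ ^ g) ^ ((v * c : (ZMod M)ˣ) : ZMod M).val)),
          ZMod.card_units_eq_totient, ZMod.card_units_eq_totient]
    _ = (∏ ξ ∈ primitiveRoots M R, f ξ) ^ (φ m / φ M) := by
        rw [hξ.prod_primitiveRoots_eq_prod_units]
        exact congrArg (· ^ _) <|
          Equiv.prod_comp (Equiv.mulRight c) fun v : (ZMod M)ˣ ↦ f ((ζ ^ g) ^ (v : ZMod M).val)

theorem eq_of_forall_prod_divisors_eq {β : Type*} [CommMonoid β] {f g : ℕ → β} {N : ℕ}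
    (hg : ∀ n < N, IsUnit (g n))
    (h : ∀ n, 0 < n → n < N → ∏ d ∈ n.divisors, f d = ∏ d ∈ n.divisors, g d) :
    ∀ n, 0 < n → n < N → f n = g n := by
  intro n
  induction n using Nat.strong_induction_on with
  | _ n ih =>
    intro hn hnN
    have hproper : ∏ d ∈ n.properDivisors, f d = ∏ d ∈ n.properDivisors, g d :=
      prod_congr rfl fun d hd ↦
        have ⟨hdn, hlt⟩ := Nat.mem_properDivisors.1 hd
        ih d hlt (Nat.pos_of_dvd_of_pos hdn hn) (hlt.trans hnN)
    have hunit : IsUnit (∏ d ∈ n.properDivisors, g d) :=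
      IsUnit.prod_iff.2 fun d hd ↦ hg d ((Nat.mem_properDivisors.1 hd).2.trans hnN)
    have := h n hn hnN
    rw [← Nat.cons_self_properDivisors hn.ne', prod_cons, prod_cons, hproper] at this
    exact hunit.mul_left_inj.1 this

theorem Nat.Coprime.sum_divisors_totient_mul_div {a b : ℕ} (h : a.Coprime b) :
    ∑ e ∈ b.divisors, φ (a * (b / e)) = φ a * b := by
  calc ∑ e ∈ b.divisors, φ (a * (b / e))
      = ∑ e ∈ b.divisors, φ a * φ (b / e) := sum_congr rfl fun e he ↦
        Nat.totient_mul (h.coprime_dvd_right (Nat.div_dvd_of_dvd (Nat.dvd_of_mem_divisors he)))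
    _ = φ a * b := by rw [← mul_sum, Nat.sum_div_divisors, Nat.sum_totient]

theorem Nat.totient_mul_prime_pow_div {g p k : ℕ} (hp : p.Prime) (hk : k ≠ 0) (hg : g ≠ 0) :
    φ (g * p ^ k) / φ (p ^ k) = φ (ordCompl[p] g) * ordProj[p] g := by
  obtain ⟨k, rfl⟩ := Nat.exists_eq_succ_of_ne_zero hk
  have hcop : (ordCompl[p] g).Coprime (p ^ (g.factorization p + (k + 1))) :=
    (Nat.coprime_ordCompl hp hg).symm.pow_right _
  have : φ (g * p ^ (k + 1)) = φ (ordCompl[p] g) * ordProj[p] g * φ (p ^ (k + 1)) := by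
    conv_lhs => rw [← Nat.ordProj_mul_ordCompl_eq_self g p]
    rw [mul_comm (ordProj[p] g), mul_assoc, ← pow_add, Nat.totient_mul hcop, ← add_assoc,
      Nat.totient_prime_pow_succ hp, Nat.totient_prime_pow_succ hp, pow_add]
    ring
  rw [this, Nat.mul_div_cancel _ (Nat.totient_pos.2 (pow_pos hp.pos _))]

def expMangoldt (k : ℕ) : ℕ := if IsPrimePow k then k.minFac else 1

theorem expMangoldt_pos (k : ℕ) : 0 < expMangoldt k := by
  unfold expMangoldt
  split_ifs
  exacts [Nat.minFac_pos k, Nat.one_pos]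

theorem expMangoldt_prime_pow {p k : ℕ} (hp : p.Prime) (hk : k ≠ 0) :
    expMangoldt (p ^ k) = p := by
  rw [expMangoldt, if_pos (hp.prime.isPrimePow.pow hk), Nat.pow_minFac hk, hp.minFac_eq]

theorem expMangoldt_mul_prime_pow {e g p k : ℕ} (hp : p.Prime) (hk : k ≠ 0) (hg : g ≠ 0)
    (he : e ∣ g) : expMangoldt (e * p ^ k) = if e ∣ ordProj[p] g then p else 1 := by
  split_ifs with heP
  · obtain ⟨j, -, rfl⟩ := (Nat.dvd_prime_pow hp).1 heP
    rw [← pow_add, expMangoldt_prime_pow hp (by omega)]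
  · refine if_neg fun hpow ↦ heP ?_
    obtain ⟨q, s, hq, -, hqs⟩ := (isPrimePow_nat_iff _).1 hpow
    have hpq : p = q := (Nat.prime_dvd_prime_iff_eq hp hq).1 <| hp.dvd_of_dvd_pow (n := s) <|
      hqs ▸ (dvd_pow_self p hk).mul_left e
    subst hpq
    obtain ⟨j, -, rfl⟩ := (Nat.dvd_prime_pow hp).1 (Dvd.intro _ hqs.symm)
    exact (hp.pow_dvd_iff_dvd_ordProj hg).1 he

theorem prod_divisors_expMangoldt_mul_prime_pow {g p k : ℕ} (hp : p.Prime) (hk : k ≠ 0)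
    (hg : g ≠ 0) :
    ∏ e ∈ g.divisors, expMangoldt (e * p ^ k) ^ φ (g / e) = p ^ (φ (g * p ^ k) / φ (p ^ k)) := by
  have hsplit : ordCompl[p] g * ordProj[p] g = g := by
    rw [mul_comm, Nat.ordProj_mul_ordCompl_eq_self]
  calc ∏ e ∈ g.divisors, expMangoldt (e * p ^ k) ^ φ (g / e)
      = ∏ e ∈ g.divisors with e ∣ ordProj[p] g, p ^ φ (g / e) := by
        rw [prod_filter]
        refine prod_congr rfl fun e he ↦ ?_
        rw [expMangoldt_mul_prime_pow hp hk hg (Nat.dvd_of_mem_divisors he), ite_pow, one_pow]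
    _ = p ^ ∑ e ∈ (ordProj[p] g).divisors, φ (ordCompl[p] g * (ordProj[p] g / e)) := by
        rw [Nat.divisors_filter_dvd_of_dvd hg (Nat.ordProj_dvd g p), prod_pow_eq_pow_sum]
        refine congrArg (p ^ ·) (sum_congr rfl fun e he ↦ ?_)
        rw [← Nat.mul_div_assoc _ (Nat.dvd_of_mem_divisors he), hsplit]
    _ = p ^ (φ (g * p ^ k) / φ (p ^ k)) := by
        rw [((Nat.coprime_ordCompl hp hg).symm.pow_right _).sum_divisors_totient_mul_div,
          Nat.totient_mul_prime_pow_div hp hk hg]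

/-- `|Res(Φ_d, Φ_m)|` for `d < m`. -/
def cyclotomicResultantNorm (m d : ℕ) : ℕ := if d ∣ m then expMangoldt (m / d) ^ φ d else 1

theorem cyclotomicResultantNorm_pos (m d : ℕ) : 0 < cyclotomicResultantNorm m d := by
  unfold cyclotomicResultantNorm
  split_ifs
  exacts [pow_pos (expMangoldt_pos _) _, Nat.one_pos]

theorem prod_divisors_cyclotomicResultantNorm {m n : ℕ} (hmn : ¬ m ∣ n) :
    ∏ d ∈ n.divisors, cyclotomicResultantNorm m d =
      expMangoldt (m / m.gcd n) ^ (φ m / φ (m / m.gcd n)) := by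
  set g := m.gcd n
  set M := m / g
  have hn : n ≠ 0 := by rintro rfl; exact hmn (dvd_zero m)
  have hg : g ≠ 0 := Nat.gcd_ne_zero_right hn
  have hmM : m = g * M := (Nat.mul_div_cancel' (Nat.gcd_dvd_left m n)).symm
  have hM : M ≠ 1 := fun h ↦ hmn (by rw [hmM, h, mul_one]; exact Nat.gcd_dvd_right m n)
  have hcofactor : ∏ d ∈ n.divisors, cyclotomicResultantNorm m d =
      ∏ e ∈ g.divisors, expMangoldt (e * M) ^ φ (g / e) := by
    calc ∏ d ∈ n.divisors, cyclotomicResultantNorm m d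
        = ∏ d ∈ n.divisors with d ∣ g, expMangoldt (m / d) ^ φ d := by
          rw [prod_filter]
          refine prod_congr rfl fun d hd ↦ ?_
          simp only [cyclotomicResultantNorm, g, Nat.dvd_gcd_iff, Nat.dvd_of_mem_divisors hd,
            and_true]
      _ = ∏ e ∈ g.divisors, expMangoldt (m / (g / e)) ^ φ (g / e) := by
          rw [Nat.divisors_filter_dvd_of_dvd hn (Nat.gcd_dvd_right m n)]
          exact (Nat.prod_div_divisors g _).symm
      _ = ∏ e ∈ g.divisors, expMangoldt (e * M) ^ φ (g / e) := by
          refine prod_congr rfl fun e he ↦ ?_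
          have he' := Nat.dvd_of_mem_divisors he
          rw [hmM, ← Nat.div_mul_right_comm (Nat.div_dvd_of_dvd he'), Nat.div_div_self he' hg]
  rw [hcofactor]
  by_cases hMpow : IsPrimePow M
  · obtain ⟨p, k, hp, hk, hpk⟩ := (isPrimePow_nat_iff M).1 hMpow
    rw [← hpk, prod_divisors_expMangoldt_mul_prime_pow hp hk.ne' hg,
      expMangoldt_prime_pow hp hk.ne', hmM, ← hpk]
  · have hone (e : ℕ) : expMangoldt (e * M) = 1 :=
      if_neg fun h ↦ hMpow (h.dvd (dvd_mul_left M e) hM)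
    rw [expMangoldt, if_neg hMpow]
    simp only [hone, one_pow, prod_const_one]

theorem prod_primitiveRoots_norm_sub_one {k : ℕ} (hk : 2 ≤ k) :
    ∏ ξ ∈ primitiveRoots k ℂ, ‖ξ - 1‖ = expMangoldt k := by
  have hroot : ∏ ξ ∈ primitiveRoots k ℂ, ‖ξ - 1‖ = ‖(cyclotomic k ℂ).eval 1‖ := by
    rw [cyclotomic_eq_prod_X_sub_primitiveRoots (Complex.isPrimitiveRoot_exp k (by omega)),
      eval_prod, norm_prod]
    simp only [eval_sub, eval_X, eval_C, norm_sub_rev]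
  rw [hroot]
  by_cases hpow : IsPrimePow k
  · obtain ⟨p, j, hp, hj, rfl⟩ := (isPrimePow_nat_iff k).1 hpow
    have : Fact p.Prime := ⟨hp⟩
    obtain ⟨j, rfl⟩ := Nat.exists_eq_succ_of_ne_zero hj.ne'
    rw [eval_one_cyclotomic_prime_pow, expMangoldt_prime_pow hp j.succ_ne_zero,
      Complex.norm_natCast]
  · rw [eval_one_cyclotomic_not_prime_pow, expMangoldt, if_neg hpow, norm_one, Nat.cast_one]
    rintro p hp (_ | j) rfl
    · rw [pow_zero] at hk
      omega
    · exact hpow (hp.prime.isPrimePow.pow j.succ_ne_zero)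

theorem prod_divisors_prod_primitiveRoots_norm_eval_cyclotomic {m n : ℕ} (hn : 0 < n)
    (hnm : n < m) :
    ∏ d ∈ n.divisors, ∏ ζ ∈ primitiveRoots m ℂ, ‖(cyclotomic d ℂ).eval ζ‖ =
      expMangoldt (m / m.gcd n) ^ (φ m / φ (m / m.gcd n)) := by
  have : NeZero m := ⟨by omega⟩
  have hmn : ¬ m ∣ n := fun h ↦ absurd (Nat.le_of_dvd hn h) (by omega)
  have hM : 2 ≤ m / m.gcd n := by
    have hgm := Nat.mul_div_cancel' (Nat.gcd_dvd_left m n)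
    have hM0 : m / m.gcd n ≠ 0 := fun h ↦ by rw [h, mul_zero] at hgm; omega
    have hM1 : m / m.gcd n ≠ 1 := fun h ↦ by
      rw [h, mul_one] at hgm
      exact hmn (hgm ▸ Nat.gcd_dvd_right m n)
    exact (Nat.two_le_iff _).2 ⟨hM0, hM1⟩
  rw [prod_comm]
  calc ∏ ζ ∈ primitiveRoots m ℂ, ∏ d ∈ n.divisors, ‖(cyclotomic d ℂ).eval ζ‖
      = ∏ ζ ∈ primitiveRoots m ℂ, ‖ζ ^ n - 1‖ := by
        refine prod_congr rfl fun ζ _ ↦ ?_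
        rw [← norm_prod, ← eval_prod, prod_cyclotomic_eq_X_pow_sub_one hn, eval_sub, eval_pow,
          eval_X, eval_one]
    _ = _ := by
      rw [(Complex.isPrimitiveRoot_exp m (NeZero.ne m)).prod_primitiveRoots_comp_pow n
        (fun z ↦ ‖z - 1‖), prod_primitiveRoots_norm_sub_one hM]

theorem prod_primitiveRoots_norm_eval_cyclotomic {m n : ℕ} (hn : 0 < n) (hnm : n < m) :
    ∏ ζ ∈ primitiveRoots m ℂ, ‖(cyclotomic n ℂ).eval ζ‖ = cyclotomicResultantNorm m n := by
  refine eq_of_forall_prod_divisors_eq (N := m)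
    (f := fun d ↦ ∏ ζ ∈ primitiveRoots m ℂ, ‖(cyclotomic d ℂ).eval ζ‖)
    (g := fun d ↦ (cyclotomicResultantNorm m d : ℝ)) (fun d _ ↦ ?_) (fun d hd hdm ↦ ?_) n hn hnm
  · exact isUnit_iff_ne_zero.2 (Nat.cast_ne_zero.2 (cyclotomicResultantNorm_pos m d).ne')
  · rw [prod_divisors_prod_primitiveRoots_norm_eval_cyclotomic hd hdm, ← Nat.cast_prod,
      prod_divisors_cyclotomicResultantNorm (fun h ↦ absurd (Nat.le_of_dvd hd h) (by omega)),
      Nat.cast_pow]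

/-- `Res(Φ_n, Φ_m)` is, up to sign, the product of `Φ_n` over the roots of the monic `Φ_m`. -/
theorem stmt2 (n m : ℕ) (hn : 1 ≤ n) (hnm : n < m) :
    (∀ p α : ℕ, p.Prime → 1 ≤ α → m = n * p ^ α →
      ‖∏ ζ ∈ primitiveRoots m ℂ, (cyclotomic n ℂ).eval ζ‖ =
        (p : ℝ) ^ n.totient) ∧
    ((¬ ∃ p α : ℕ, p.Prime ∧ 1 ≤ α ∧ m = n * p ^ α) →
      ‖∏ ζ ∈ primitiveRoots m ℂ, (cyclotomic n ℂ).eval ζ‖ = 1) := by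
  rw [norm_prod, prod_primitiveRoots_norm_eval_cyclotomic hn hnm, cyclotomicResultantNorm]
  refine ⟨fun p α hp hα hm ↦ ?_, fun hnot ↦ ?_⟩
  · rw [if_pos (Dvd.intro _ hm.symm), hm, Nat.mul_div_cancel_left _ hn,
      expMangoldt_prime_pow hp (by omega), Nat.cast_pow]
  · split_ifs with hdvd
    · have hone : expMangoldt (m / n) = 1 := if_neg fun hpow ↦ by
        obtain ⟨p, α, hp, hα, hpα⟩ := (isPrimePow_nat_iff _).1 hpow
        exact hnot ⟨p, α, hp, hα, by rw [hpα, Nat.mul_div_cancel' hdvd]⟩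
      rw [hone, one_pow, Nat.cast_one]
    · exact Nat.cast_one
end

section
/- Let n be an odd positive integer and m = 2t+1 an odd positive integer with gcd(m, n) = 1 and 0 ≤ t < n. Define f(x) = 1 + x + ... + x^t and g(x) = 1 + x + ... + x^{t-1}. Then ∏_{j=0}^{n-1} (f(ω^j)f(ω^{-j}) - g(ω^j)g(ω^{-j})) = m, where ω = e^{2πi/n}. -/
/-!
Writing `f` and `g` for the two geometric sums, `x ^ t f(x⁻¹) = f(x)` and `x ^ t g(x⁻¹) = x g(x)`,
while `f² - x g² = 1 + x + ⋯ + x ^ (2t)`; so the `j`-th factor is `ω^(-jt)` times the geometric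
sum of length `m` at `ω ^ j`. The powers of `ω` multiply to `1` because `n` is odd. The geometric
sums contribute `m` at `j = 0` and, for `j ≠ 0`, the quotients `(1 - ω^(jm)) / (1 - ω^j)`, whose
product is `1` since `ω ^ m` is again a primitive `n`-th root of unity.
-/

open Finset Polynomial

theorem geom_sum_sq_sub_mul_geom_sum_sq {R : Type*} [CommRing R] (x : R) (t : ℕ) :
    (∑ i ∈ range (t + 1), x ^ i) ^ 2 - x * (∑ i ∈ range t, x ^ i) ^ 2 =
      ∑ i ∈ range (2 * t + 1), x ^ i := by
  induction t with
  | zero => simp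
  | succ t ih =>
    rw [sum_range_succ] at ih
    rw [sum_range_succ (n := t + 1), sum_range_succ (n := t),
      show 2 * (t + 1) + 1 = 2 * t + 1 + 1 + 1 by ring, sum_range_succ, sum_range_succ]
    linear_combination ih

theorem pow_mul_geom_sum_inv {K : Type*} [Field K] {x : K} (hx : x ≠ 0) (k : ℕ) :
    x ^ k * ∑ i ∈ range k, x⁻¹ ^ i = x * ∑ i ∈ range k, x ^ i := by
  induction k with
  | zero => simp
  | succ k ih =>
    rw [sum_range_succ', sum_range_succ]
    simp only [pow_succ, ← sum_mul, pow_zero]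
    linear_combination ih + x ^ k * (∑ i ∈ range k, x⁻¹ ^ i) * mul_inv_cancel₀ hx

theorem geom_sum_mul_geom_sum_inv_sub {K : Type*} [Field K] {x : K} (hx : x ≠ 0) (t : ℕ) :
    (∑ i ∈ range (t + 1), x ^ i) * ∑ i ∈ range (t + 1), x⁻¹ ^ i -
      (∑ i ∈ range t, x ^ i) * ∑ i ∈ range t, x⁻¹ ^ i =
      x⁻¹ ^ t * ∑ i ∈ range (2 * t + 1), x ^ i := by
  apply mul_left_cancel₀ (pow_ne_zero (t + 1) hx)
  have hinv : x ^ t * x⁻¹ ^ t = 1 := by rw [inv_pow, mul_inv_cancel₀ (pow_ne_zero t hx)]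
  rw [← geom_sum_sq_sub_mul_geom_sum_sq]
  linear_combination (∑ i ∈ range (t + 1), x ^ i) * pow_mul_geom_sum_inv hx (t + 1) -
    x * (∑ i ∈ range t, x ^ i) * pow_mul_geom_sum_inv hx t -
    x * ((∑ i ∈ range (t + 1), x ^ i) ^ 2 - x * (∑ i ∈ range t, x ^ i) ^ 2) * hinv

theorem prod_range_pow_eq_one_of_odd {M : Type*} [CommMonoid M] {ζ : M} {n : ℕ}
    (hζ : ζ ^ n = 1) (hn : Odd n) : ∏ j ∈ range n, ζ ^ j = 1 := by
  obtain ⟨k, rfl⟩ := hn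
  rw [prod_pow_eq_pow_sum, sum_range_id, Nat.add_sub_cancel,
    Nat.mul_div_assoc _ (dvd_mul_right 2 k), Nat.mul_div_cancel_left k two_pos,
    pow_mul, hζ, one_pow]

theorem IsPrimitiveRoot.prod_range_geom_sum_pow {R : Type*} [CommRing R] [IsDomain R] {ζ : R}
    {n m : ℕ} (hζ : IsPrimitiveRoot ζ n) (hm : m.Coprime n) :
    ∏ j ∈ range n, ∑ i ∈ range m, (ζ ^ j) ^ i = m := by
  cases n with
  | zero => simp [(Nat.coprime_zero_right m).mp hm]
  | succ n =>
    have hne : ∏ k ∈ range n, (1 - ζ ^ (k + 1)) ≠ 0 := prod_ne_zero_iff.mpr fun k hk =>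
      sub_ne_zero.mpr (hζ.pow_ne_one_of_pos_of_lt k.succ_ne_zero (by simpa using hk)).symm
    have hquot : (∏ k ∈ range n, (1 - ζ ^ (k + 1))) *
        ∏ k ∈ range n, ∑ i ∈ range m, (ζ ^ (k + 1)) ^ i = ∏ k ∈ range n, (1 - ζ ^ (k + 1)) := by
      rw [← prod_mul_distrib, hζ.prod_one_sub_pow_eq_order,
        ← (hζ.pow_of_coprime m hm).prod_one_sub_pow_eq_order]
      exact prod_congr rfl fun k _ => by rw [mul_neg_geom_sum, pow_right_comm]
    rw [prod_range_succ', mul_eq_left₀ hne |>.mp hquot]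
    simp

theorem stmt5_general (n t m : ℕ) (hn : Odd n) (hm : m = 2 * t + 1)
    (hcop : Nat.Coprime m n) :
    (∏ j ∈ Finset.range n,
      (Polynomial.aeval ((Complex.exp (2 * Real.pi * Complex.I / n)) ^ j)
          (∑ i ∈ Finset.range (t + 1), (X : Polynomial ℤ) ^ i) *
        Polynomial.aeval (((Complex.exp (2 * Real.pi * Complex.I / n)) ^ j)⁻¹)
          (∑ i ∈ Finset.range (t + 1), (X : Polynomial ℤ) ^ i) -
       Polynomial.aeval ((Complex.exp (2 * Real.pi * Complex.I / n)) ^ j)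
          (∑ i ∈ Finset.range t, (X : Polynomial ℤ) ^ i) *
        Polynomial.aeval (((Complex.exp (2 * Real.pi * Complex.I / n)) ^ j)⁻¹)
          (∑ i ∈ Finset.range t, (X : Polynomial ℤ) ^ i))) = (m : ℂ) := by
  set ω := Complex.exp (2 * Real.pi * Complex.I / n)
  have hω : IsPrimitiveRoot ω n := Complex.isPrimitiveRoot_exp n hn.pos.ne'
  simp only [map_sum, map_pow, aeval_X]
  rw [prod_congr rfl fun j _ =>
      geom_sum_mul_geom_sum_inv_sub (pow_ne_zero j (hω.ne_zero hn.pos.ne')) t,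
    prod_mul_distrib, prod_pow, prod_inv_distrib, prod_range_pow_eq_one_of_odd hω.pow_eq_one hn,
    inv_one, one_pow, one_mul, ← hm, hω.prod_range_geom_sum_pow hcop]

/-- Let `n` be odd, `m = 2t+1` with `gcd(m,n) = 1` and `0 ≤ t < n`. With
`f = 1 + X + ⋯ + X^t` and `g = 1 + X + ⋯ + X^{t-1}`, the dihedral group determinant
`∏_{j<n} (f(ω^j) f(ω^{-j}) - g(ω^j) g(ω^{-j}))` equals `m`, where `ω = e^{2πi/n}`. -/
theorem stmt5 (n t m : ℕ) (hn : Odd n) (hpos : 0 < n) (hm : m = 2 * t + 1)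
    (hcop : Nat.Coprime m n) (ht : t < n) :
    (∏ j ∈ Finset.range n,
      (Polynomial.aeval ((Complex.exp (2 * Real.pi * Complex.I / n)) ^ j)
          (∑ i ∈ Finset.range (t + 1), (X : Polynomial ℤ) ^ i) *
        Polynomial.aeval (((Complex.exp (2 * Real.pi * Complex.I / n)) ^ j)⁻¹)
          (∑ i ∈ Finset.range (t + 1), (X : Polynomial ℤ) ^ i) -
       Polynomial.aeval ((Complex.exp (2 * Real.pi * Complex.I / n)) ^ j)
          (∑ i ∈ Finset.range t, (X : Polynomial ℤ) ^ i) *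
        Polynomial.aeval (((Complex.exp (2 * Real.pi * Complex.I / n)) ^ j)⁻¹)
          (∑ i ∈ Finset.range t, (X : Polynomial ℤ) ^ i))) = (m : ℂ) :=
  stmt5_general n t m hn hm hcop
end

section
/- Let n be even and f, g ∈ ℤ[x]. If the integer D = ∏_{j=0}^{n-1} (f(ω^j)f(ω^{-j}) - g(ω^j)g(ω^{-j})) is odd (ω = e^{2πi/n}), then D ≡ 1 (mod 4). -/
open Polynomial

/-!
The factors of `D` at `ω ^ j` and `ω ^ (-j)` coincide, and those at `j = 0` and `j = n / 2`
are `f(1)² - g(1)²` and `f(-1)² - g(-1)²`. Hence `D = (f(1)² - g(1)²) (f(-1)² - g(-1)²) P²`,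
where `P` is the product of the factors over a half system, i.e. a choice of one element of each
pair `{a, -a}` with `a ≠ -a` in `ZMod n`. An automorphism of `ℚ(ω)` sends `ω` to `ω ^ u` with `u`
a unit mod `n`, and multiplication by `u` maps a half system to another one, so `P` is Galois
invariant; being an algebraic integer, it is a rational integer. Finally `f(1) ≡ f(-1)` and
`g(1) ≡ g(-1)` mod 2, so when `D` is odd both linear factors are congruent to the same `±1`
mod 4, and `D ≡ P² ≡ 1 (mod 4)`.
-/

open Finset

section HalfSystem

variable {G M : Type*} [InvolutiveNeg G]

structure IsHalfSystem (I : Finset G) : Prop where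
  neg_notMem : ∀ a ∈ I, -a ∉ I
  mem_or_neg_mem : ∀ a, -a ≠ a → a ∈ I ∨ -a ∈ I

namespace IsHalfSystem

variable {I J : Finset G} {a : G}

theorem neg_ne (hI : IsHalfSystem I) (ha : a ∈ I) : -a ≠ a :=
  fun h => hI.neg_notMem a ha (by rwa [h])

theorem neg_mem_of_notMem (hI : IsHalfSystem I) (hne : -a ≠ a) (ha : a ∉ I) : -a ∈ I :=
  (hI.mem_or_neg_mem a hne).resolve_left ha

theorem map (hI : IsHalfSystem I) (e : G ≃ G) (he : ∀ a, e (-a) = -e a) :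
    IsHalfSystem (I.map e.toEmbedding) := by
  have he' : ∀ b, e.symm (-b) = -e.symm b := fun b => by
    rw [Equiv.symm_apply_eq, he, Equiv.apply_symm_apply]
  refine ⟨fun b hb => ?_, fun b hb => ?_⟩
  · rw [mem_map_equiv] at hb ⊢
    rw [he']
    exact hI.neg_notMem _ hb
  · simp only [mem_map_equiv, he']
    refine hI.mem_or_neg_mem _ fun h => hb ?_
    rw [← he', e.symm.injective.eq_iff] at h
    exact h

variable [DecidableEq G] [CommMonoid M] {t : G → M}

theorem prod_eq (hI : IsHalfSystem I) (hJ : IsHalfSystem J) (ht : ∀ a, t (-a) = t a) :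
    ∏ a ∈ I, t a = ∏ a ∈ J, t a := by
  refine prod_nbij' (fun a => if a ∈ J then a else -a) (fun b => if b ∈ I then b else -b)
    ?_ ?_ ?_ ?_ ?_
  · intro a ha
    split_ifs with h
    exacts [h, hJ.neg_mem_of_notMem (hI.neg_ne ha) h]
  · intro b hb
    split_ifs with h
    exacts [h, hI.neg_mem_of_notMem (hJ.neg_ne hb) h]
  · intro a ha
    by_cases h : a ∈ J
    · simp [h, ha]
    · simp [h, hI.neg_notMem a ha]
  · intro b hb
    by_cases h : b ∈ I
    · simp [h, hb]
    · simp [h, hJ.neg_notMem b hb]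
  · intro a _
    split_ifs <;> simp [ht]

theorem prod_comp_eq (hI : IsHalfSystem I) (ht : ∀ a, t (-a) = t a) (e : G ≃ G)
    (he : ∀ a, e (-a) = -e a) : ∏ a ∈ I, t (e a) = ∏ a ∈ I, t a :=
  (prod_map I e.toEmbedding t).symm.trans ((hI.map e he).prod_eq hI ht)

theorem prod_univ [Fintype G] (hI : IsHalfSystem I) (ht : ∀ a, t (-a) = t a) :
    ∏ a, t a = (∏ a with -a = a, t a) * (∏ a ∈ I, t a) ^ 2 := by
  have hdisj : Disjoint I (I.map (Equiv.neg G).toEmbedding) := by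
    rw [disjoint_left]
    intro a ha ha'
    rw [mem_map_equiv] at ha'
    exact hI.neg_notMem a ha ha'
  have hsplit : ({a | -a ≠ a} : Finset G) = I.disjUnion _ hdisj := by
    ext a
    simp only [mem_filter, mem_univ, true_and, mem_disjUnion, mem_map_equiv, Equiv.neg_symm,
      Equiv.neg_apply]
    refine ⟨hI.mem_or_neg_mem a, ?_⟩
    rintro (ha | ha)
    · exact hI.neg_ne ha
    · simpa [eq_comm] using hI.neg_ne ha
  rw [← prod_filter_mul_prod_filter_not univ (fun a => -a = a), hsplit, prod_disjUnion,
    prod_map]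
  simp [ht, sq]

end IsHalfSystem

theorem isHalfSystem_filter_lt [Fintype G] [DecidableEq G] {α : Type*} [LinearOrder α]
    (f : G → α) (hf : Function.Injective f) :
    IsHalfSystem ({a | f a < f (-a)} : Finset G) := by
  refine ⟨fun a ha ha' => ?_, fun a hne => ?_⟩
  · simp only [mem_filter, mem_univ, true_and, neg_neg] at ha ha'
    exact lt_asymm ha ha'
  · simp only [mem_filter, mem_univ, true_and, neg_neg]
    exact lt_or_gt_of_ne (hf.ne hne.symm)

end HalfSystem

namespace ZMod

variable {M : Type*} [CommMonoid M] {n : ℕ} [NeZero n]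

theorem prod_range_eq_prod_val (h : ℕ → M) :
    ∏ j ∈ range n, h j = ∏ a : ZMod n, h a.val := by
  obtain ⟨m, rfl⟩ := Nat.exists_eq_succ_of_ne_zero (NeZero.ne n)
  exact (Fin.prod_univ_eq_prod_range h _).symm

theorem prod_filter_neg_eq_self {s : ℕ} (hn : n = s + s) (t : ZMod n → M) :
    ∏ a with -a = a, t a = t 0 * t s := by
  have hs : s < n := by have := NeZero.ne n; omega
  have hval : (s : ZMod n).val = s := val_cast_of_lt hs
  have hfilter : ({a | -a = a} : Finset (ZMod n)) = {0, (s : ZMod n)} := by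
    ext a
    simp only [mem_filter, mem_univ, true_and, mem_insert, mem_singleton, neg_eq_self_iff]
    refine or_congr_right ⟨fun h => ?_, fun h => ?_⟩
    · rw [← natCast_zmod_val a, show a.val = s by omega]
    · rw [h, hval]; omega
  have h0 : (0 : ZMod n) ≠ s := fun h => by
    have := congrArg val h
    rw [hval, val_zero] at this
    omega
  rw [hfilter, prod_pair h0]

end ZMod

section PowVal

variable {n : ℕ} [NeZero n]

theorem pow_zmod_val_add {M : Type*} [Monoid M] {x : M} (hx : x ^ n = 1) (a b : ZMod n) :
    x ^ (a + b).val = x ^ a.val * x ^ b.val := by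
  rw [ZMod.val_add, ← pow_eq_pow_mod _ hx, pow_add]

theorem pow_zmod_val_neg {G : Type*} [DivisionMonoid G] {x : G} (hx : x ^ n = 1) (a : ZMod n) :
    x ^ (-a).val = (x ^ a.val)⁻¹ :=
  eq_inv_of_mul_eq_one_left <| by
    rw [← pow_zmod_val_add hx, neg_add_cancel, ZMod.val_zero, pow_zero]

theorem IsPrimitiveRoot.algEquiv_pow_val {R S : Type*} [CommRing R] [CommRing S] [IsDomain S]
    [Algebra R S] {ζ : S} (hζ : IsPrimitiveRoot ζ n) (σ : S ≃ₐ[R] S) (a : ZMod n) :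
    σ (ζ ^ a.val) = ζ ^ ((hζ.autToPow R σ : ZMod n) * a).val := by
  rw [map_pow, ← hζ.autToPow_spec R σ, ← pow_mul, ZMod.val_mul,
    ← pow_eq_pow_mod _ hζ.pow_eq_one]

end PowVal

theorem IsIntegral.aeval {R A : Type*} [CommRing R] [CommRing A] [Algebra R A] {x : A}
    (hx : IsIntegral R x) (p : R[X]) : IsIntegral R (aeval x p) :=
  Algebra.adjoin_le (S := integralClosure R A) (Set.singleton_subset_iff.2 hx)
    (aeval_mem_adjoin_singleton R x)

section DihedralFactor

variable {L L' : Type*} [Field L] [Field L'] (f g : ℤ[X])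

noncomputable def dihedralFactor (x : L) : L :=
  aeval x f * aeval x⁻¹ f - aeval x g * aeval x⁻¹ g

theorem dihedralFactor_inv (x : L) : dihedralFactor f g x⁻¹ = dihedralFactor f g x := by
  simp only [dihedralFactor, inv_inv]
  ring

theorem map_dihedralFactor {F : Type*} [FunLike F L L'] [RingHomClass F L L'] (φ : F) (x : L) :
    φ (dihedralFactor f g x) = dihedralFactor f g (φ x) := by
  have hφ : ∀ (p : ℤ[X]) (y : L), φ (aeval y p) = aeval (φ y) p := fun p y =>
    (aeval_algHom_apply (RingHom.toIntAlgHom (φ : L →+* L')) y p).symm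
  simp only [dihedralFactor, map_sub, map_mul, hφ, map_inv₀]

theorem dihedralFactor_intCast {k : ℤ} (hk : (k : L)⁻¹ = k) :
    dihedralFactor f g (k : L) = ((f.eval k ^ 2 - g.eval k ^ 2 : ℤ) : L) := by
  simp only [dihedralFactor, hk, aeval_def, eval₂_at_intCast, eq_intCast]
  push_cast
  ring

theorem isIntegral_dihedralFactor {x : L} (hx : IsIntegral ℤ x) (hx' : IsIntegral ℤ x⁻¹) :
    IsIntegral ℤ (dihedralFactor f g x) :=
  ((hx.aeval f).mul (hx'.aeval f)).sub ((hx.aeval g).mul (hx'.aeval g))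

theorem dihedralFactor_pow_zmod_val_neg {n : ℕ} [NeZero n] {x : L} (hx : x ^ n = 1) (a : ZMod n) :
    dihedralFactor f g (x ^ (-a).val) = dihedralFactor f g (x ^ a.val) := by
  rw [pow_zmod_val_neg hx, dihedralFactor_inv]

end DihedralFactor

theorem exists_intCast_eq_of_forall_algEquiv_apply_eq {E : Type*} [Field E] [Algebra ℚ E]
    [IsGalois ℚ E] {x : E} (hx : IsIntegral ℤ x) (hfix : ∀ σ : E ≃ₐ[ℚ] E, σ x = x) :
    ∃ z : ℤ, (z : E) = x := by
  obtain ⟨q, rfl⟩ := (InfiniteGalois.mem_range_algebraMap_iff_fixed x).2 hfix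
  obtain ⟨z, rfl⟩ := IsIntegrallyClosed.isIntegral_iff.1
    ((isIntegral_algebraMap_iff (algebraMap ℚ E).injective).1 hx)
  exact ⟨z, by simp⟩

namespace IsPrimitiveRoot

open IntermediateField

variable {L : Type*} [Field L] {n : ℕ} [NeZero n] {ζ : L}

theorem isGalois_rat_adjoin [CharZero L] (hζ : IsPrimitiveRoot ζ n) :
    IsGalois ℚ ℚ⟮ζ⟯ := by
  have : IsCyclotomicExtension {n} ℚ ℚ⟮ζ⟯ := by
    change IsCyclotomicExtension {n} ℚ ℚ⟮ζ⟯.toSubalgebra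
    rw [adjoin_simple_toSubalgebra_of_isAlgebraic
      (hζ.isIntegral (NeZero.pos n)).tower_top.isAlgebraic]
    exact hζ.adjoin_isCyclotomicExtension ℚ
  exact IsCyclotomicExtension.isGalois {n} ℚ _

theorem prod_range_dihedralFactor (hζ : IsPrimitiveRoot ζ n) (f g : ℤ[X]) {s : ℕ}
    (hn : n = s + s) {I : Finset (ZMod n)} (hI : IsHalfSystem I) :
    ∏ j ∈ range n, dihedralFactor f g (ζ ^ j) = dihedralFactor f g 1 * dihedralFactor f g (-1) *
      (∏ a ∈ I, dihedralFactor f g (ζ ^ a.val)) ^ 2 := by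
  have hs : ζ ^ s = -1 :=
    (hζ.pow (NeZero.pos n) (by omega : n = s * 2)).eq_neg_one_of_two_right
  rw [ZMod.prod_range_eq_prod_val,
    hI.prod_univ (dihedralFactor_pow_zmod_val_neg f g hζ.pow_eq_one),
    ZMod.prod_filter_neg_eq_self hn, ZMod.val_zero, pow_zero, ZMod.val_cast_of_lt (by have := NeZero.ne n; omega), hs]

theorem algEquiv_prod_dihedralFactor (hζ : IsPrimitiveRoot ζ n) (f g : ℤ[X]) {R : Type*}
    [CommRing R] [Algebra R L] (σ : L ≃ₐ[R] L) {I : Finset (ZMod n)} (hI : IsHalfSystem I) :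
    σ (∏ a ∈ I, dihedralFactor f g (ζ ^ a.val)) = ∏ a ∈ I, dihedralFactor f g (ζ ^ a.val) := by
  simp only [map_prod, map_dihedralFactor, hζ.algEquiv_pow_val]
  exact hI.prod_comp_eq (t := fun a => dihedralFactor f g (ζ ^ a.val))
    (dihedralFactor_pow_zmod_val_neg f g hζ.pow_eq_one) (Units.mulLeft (hζ.autToPow R σ))
    (mul_neg _)

theorem exists_intCast_eq_prod_dihedralFactor [CharZero L] (hζ : IsPrimitiveRoot ζ n)
    (f g : ℤ[X]) {I : Finset (ZMod n)} (hI : IsHalfSystem I) :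
    ∃ z : ℤ, (z : L) = ∏ a ∈ I, dihedralFactor f g (ζ ^ a.val) := by
  have := hζ.isGalois_rat_adjoin
  set ζK : ℚ⟮ζ⟯ := ⟨ζ, mem_adjoin_simple_self ℚ ζ⟩
  have hζK : IsPrimitiveRoot ζK n := coe_submonoidClass_iff.mp hζ
  have hint : ∀ a : ZMod n, IsIntegral ℤ (ζK ^ a.val) := fun a =>
    (hζK.isIntegral (NeZero.pos n)).pow _
  obtain ⟨z, hz⟩ := exists_intCast_eq_of_forall_algEquiv_apply_eq
    (IsIntegral.prod _ fun a _ => isIntegral_dihedralFactor f g (hint a)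
      (pow_zmod_val_neg hζK.pow_eq_one a ▸ hint (-a)))
    (fun σ => hζK.algEquiv_prod_dihedralFactor f g σ hI)
  refine ⟨z, ?_⟩
  simpa [map_prod, map_dihedralFactor] using congrArg (algebraMap ℚ⟮ζ⟯ L) hz

end IsPrimitiveRoot

theorem Int.emod_four_eq_one_of_odd_sq_sub_sq_mul {a b c d z : ℤ} (hab : 2 ∣ a - b)
    (hcd : 2 ∣ c - d) (hodd : Odd ((a ^ 2 - c ^ 2) * (b ^ 2 - d ^ 2) * z ^ 2)) :
    (a ^ 2 - c ^ 2) * (b ^ 2 - d ^ 2) * z ^ 2 % 4 = 1 := by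
  obtain ⟨k, hk⟩ := hab
  obtain ⟨l, hl⟩ := hcd
  -- when it is odd, `x ^ 2 - y ^ 2` mod 4 depends only on the parities of `x` and `y`
  have key : ∀ b d k l z : ZMod 4,
      ((b + 2 * k) ^ 2 - (d + 2 * l) ^ 2) * (b ^ 2 - d ^ 2) * z ^ 2 ≠ 3 := by
    decide
  have hne : (((a ^ 2 - c ^ 2) * (b ^ 2 - d ^ 2) * z ^ 2 : ℤ) : ZMod 4) ≠ 3 := by
    rw [show a = b + 2 * k by omega, show c = d + 2 * l by omega]
    push_cast
    exact key _ _ _ _ _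
  have := Int.odd_iff.mp hodd
  have : (a ^ 2 - c ^ 2) * (b ^ 2 - d ^ 2) * z ^ 2 % 4 ≠ 3 := fun h3 =>
    hne (by rw [← ZMod.intCast_mod, Nat.cast_ofNat, h3]; rfl)
  omega

/-- For `n` even and `f, g ∈ ℤ[X]`: if the integer dihedral determinant
`D = ∏_{j<n} (f(ω^j) f(ω^{-j}) - g(ω^j) g(ω^{-j}))` is odd, then `D ≡ 1 (mod 4)`. -/
theorem stmt6 (n : ℕ) (hn : Even n) (hpos : 0 < n) (f g : Polynomial ℤ) (D : ℤ)
    (hD : (∏ j ∈ Finset.range n,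
        (Polynomial.aeval ((Complex.exp (2 * Real.pi * Complex.I / n)) ^ j) f *
          Polynomial.aeval (((Complex.exp (2 * Real.pi * Complex.I / n)) ^ j)⁻¹) f -
         Polynomial.aeval ((Complex.exp (2 * Real.pi * Complex.I / n)) ^ j) g *
          Polynomial.aeval (((Complex.exp (2 * Real.pi * Complex.I / n)) ^ j)⁻¹) g)) = (D : ℂ))
    (hodd : Odd D) : D % 4 = 1 := by
  have : NeZero n := ⟨hpos.ne'⟩
  obtain ⟨s, hs⟩ := hn
  have hζ := Complex.isPrimitiveRoot_exp n hpos.ne'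
  have hI := isHalfSystem_filter_lt (G := ZMod n) ZMod.val (ZMod.val_injective n)
  obtain ⟨z, hz⟩ := hζ.exists_intCast_eq_prod_dihedralFactor f g hI
  have hDz : D = (f.eval 1 ^ 2 - g.eval 1 ^ 2) * (f.eval (-1) ^ 2 - g.eval (-1) ^ 2) * z ^ 2 := by
    have h := hζ.prod_range_dihedralFactor f g hs hI
    rw [← hz, ← Int.cast_one, ← Int.cast_neg, dihedralFactor_intCast f g (by simp),
      dihedralFactor_intCast f g (by simp)] at h
    exact_mod_cast hD.symm.trans h
  rw [hDz] at hodd ⊢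
  exact Int.emod_four_eq_one_of_odd_sq_sub_sq_mul (by simpa using sub_dvd_eval_sub 1 (-1) f)
    (by simpa using sub_dvd_eval_sub 1 (-1) g) hodd
end

section
/- For the dihedral group D_{2n} with n = 3m and m odd, λ(D_{2n}) = 4. -/
/-!
Listing `DihedralGroup n` as rotations `r i` followed by reflections `sr i`, the group matrix of
`x` becomes `[[A, Bᵀ], [B, Aᵀ]]` with `A`, `B` the circulants of `a = x ∘ r`, `b = x ∘ sr`.
Multiplying by `[[Aᵀ, -Bᵀ], [-B, A]]` gives `|det| = |det (circulant c)|`, where `c` is the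
difference of the autocorrelations of `a` and `b`; `c` is even and `∑ c = (∑ a)² - (∑ b)²`.

For odd `n` and even `c`, the functions on `ZMod n` split into the constants, the even functions
of sum zero and the odd functions, and `circulant c` acts on the last two in the same way; hence
`det (circulant c) = (∑ c) · s²` with `s ∈ ℤ`. So `2 ∣ det` forces `4 ∣ det`, since
`(∑ a)² - (∑ b)²` is either odd or divisible by `4`. If `3 ∣ n` and `3 ∣ ∑ c`, reduction
`ZMod n → ZMod 3` is an odd function killed by `circulant c` mod `3`, which forces `3 ∣ s`; so
`3 ∣ det` forces `9 ∣ det`. Finally `x = δ_{r 0} + δ_{r 1}` gives `∑ c = 4` and `s = ±1`.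
-/

open Matrix

namespace GroupDet

section HalfSystem

variable {n : ℕ}

theorem intCast_eq_intCast_iff_of_abs_sub_lt {u v : ℤ} (huv : |u - v| < n) :
    (u : ZMod n) = v ↔ u = v := by
  refine ⟨fun huv' => ?_, congrArg _⟩
  rw [ZMod.intCast_eq_intCast_iff_dvd_sub] at huv'
  have := Int.eq_zero_of_abs_lt_dvd huv' (by rwa [abs_sub_comm])
  omega

/-- Representatives `1, …, n / 2` of the nonzero classes of `ZMod n` up to sign, `n` odd. -/
def halfRep (k : Fin (n / 2)) : ZMod n := ((k : ℤ) + 1 : ℤ)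

theorem halfRep_injective : Function.Injective (halfRep : Fin (n / 2) → ZMod n) := by
  intro k j hkj
  rw [halfRep, halfRep, intCast_eq_intCast_iff_of_abs_sub_lt (by rw [abs_lt]; omega)] at hkj
  omega

theorem halfRep_ne_zero (k : Fin (n / 2)) : (halfRep k : ZMod n) ≠ 0 := by
  rw [halfRep, ← Int.cast_zero, Ne, intCast_eq_intCast_iff_of_abs_sub_lt (by rw [abs_lt]; omega)]
  omega

theorem halfRep_ne_neg_halfRep (hn : Odd n) (k j : Fin (n / 2)) :
    (halfRep k : ZMod n) ≠ -halfRep j := by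
  have := Nat.odd_iff.mp hn
  rw [halfRep, halfRep, ← Int.cast_neg, Ne,
    intCast_eq_intCast_iff_of_abs_sub_lt (by rw [abs_lt]; omega)]
  omega

variable [NeZero n] (hn : Odd n)
include hn

noncomputable def halfEquiv : Unit ⊕ Fin (n / 2) ⊕ Fin (n / 2) ≃ ZMod n :=
  Equiv.ofBijective (Sum.elim (fun _ => 0) (Sum.elim halfRep fun k => -halfRep k)) <| by
    rw [Fintype.bijective_iff_injective_and_card]
    refine ⟨?_, by have := Nat.odd_iff.mp hn; simp [ZMod.card]; omega⟩
    rintro (_ | k | k) (_ | j | j) hkj <;> simp only [Sum.elim_inl, Sum.elim_inr] at hkj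
    · rfl
    · exact absurd hkj.symm (halfRep_ne_zero j)
    · exact absurd (neg_eq_zero.mp hkj.symm) (halfRep_ne_zero j)
    · exact absurd hkj (halfRep_ne_zero k)
    · rw [halfRep_injective hkj]
    · exact absurd hkj (halfRep_ne_neg_halfRep hn k j)
    · exact absurd (neg_eq_zero.mp hkj) (halfRep_ne_zero k)
    · exact absurd hkj.symm (halfRep_ne_neg_halfRep hn j k)
    · rw [halfRep_injective (neg_injective hkj)]

theorem sum_eq_add_sum_halfRep {M : Type*} [AddCommMonoid M] (F : ZMod n → M) :
    ∑ t, F t = F 0 + ∑ k : Fin (n / 2), (F (halfRep k) + F (-halfRep k)) := by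
  rw [← (halfEquiv hn).sum_comp, Fintype.sum_sum_type, Fintype.sum_sum_type,
    Finset.sum_add_distrib]
  simp [halfEquiv]

theorem sum_eq_zero_of_odd {M : Type*} [AddCommGroup M] {f : ZMod n → M} (hf : f.Odd)
    (hf0 : f 0 = 0) : ∑ t, f t = 0 := by
  simp [sum_eq_add_sum_halfRep hn, hf _, hf0]

theorem apply_eq_apply_zero_of_periodic_two {M : Type*} {u : ZMod n → M}
    (hu : Function.Periodic u 2) (i : ZMod n) : u i = u 0 := by
  have hi : ((n / 2 + 1) * i.val) • (2 : ZMod n) = i := by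
    have hn' : ((2 * (n / 2) + 1 : ℕ) : ZMod n) = 0 := by
      rw [show 2 * (n / 2) + 1 = n by have := Nat.odd_iff.mp hn; omega, ZMod.natCast_self]
    rw [nsmul_eq_mul, Nat.cast_mul, ZMod.natCast_zmod_val]
    push_cast at hn' ⊢
    linear_combination i * hn'
  rw [← hi, hu.nsmul_eq]

end HalfSystem

section OddFunctions

variable (R : Type*) [CommRing R] (n : ℕ)

/-- Its columns `δ_{k+1} - δ_{-(k+1)}` form a basis of the odd functions on `ZMod n`, `n` odd. -/
def oddMatrix : Matrix (ZMod n) (Fin (n / 2)) R :=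
  of fun t k => (if t = halfRep k then 1 else 0) - if t = -halfRep k then 1 else 0

variable {R n}

/-- For even `c`, the matrix of `circulant c` on the odd functions, in the basis `oddMatrix`. -/
def oddBlock (c : ZMod n → R) : Matrix (Fin (n / 2)) (Fin (n / 2)) R :=
  of fun k j => c (halfRep k - halfRep j) - c (halfRep k + halfRep j)

theorem oddMatrix_neg_apply (t : ZMod n) (k : Fin (n / 2)) :
    oddMatrix R n (-t) k = -oddMatrix R n t k := by
  simp only [oddMatrix, of_apply, neg_eq_iff_eq_neg, neg_neg]
  ring

theorem oddMatrix_zero_apply (k : Fin (n / 2)) : oddMatrix R n 0 k = 0 := by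
  simp [oddMatrix, eq_comm, halfRep_ne_zero k]

theorem odd_oddMatrix_mulVec (v : Fin (n / 2) → R) : (oddMatrix R n *ᵥ v).Odd := by
  intro t
  simp only [mulVec, dotProduct, oddMatrix_neg_apply, neg_mul, Finset.sum_neg_distrib]

variable (hn : Odd n)
include hn

theorem oddMatrix_halfRep_apply (j k : Fin (n / 2)) :
    oddMatrix R n (halfRep j) k = if j = k then 1 else 0 := by
  simp [oddMatrix, halfRep_injective.eq_iff, halfRep_ne_neg_halfRep hn]

theorem oddMatrix_mulVec_halfRep (v : Fin (n / 2) → R) (k : Fin (n / 2)) :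
    (oddMatrix R n *ᵥ v) (halfRep k) = v k := by
  simp [mulVec, dotProduct, oddMatrix_halfRep_apply hn]

variable [NeZero n]

theorem oddMatrix_mulVec_comp_halfRep {f : ZMod n → R} (hf : f.Odd) (hf0 : f 0 = 0) :
    oddMatrix R n *ᵥ (f ∘ halfRep) = f := by
  funext t
  obtain ⟨x, rfl⟩ := (halfEquiv hn).surjective t
  rcases x with _ | k | k <;> simp only [halfEquiv, Equiv.ofBijective_apply, Sum.elim_inl,
    Sum.elim_inr]
  · simp [mulVec, dotProduct, oddMatrix_zero_apply, hf0]
  · exact oddMatrix_mulVec_halfRep hn _ k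
  · rw [odd_oddMatrix_mulVec, hf, oddMatrix_mulVec_halfRep hn, Function.comp_apply]

theorem circulant_mul_oddMatrix {c : ZMod n → R} (hc : c.Even) :
    circulant c * oddMatrix R n = oddMatrix R n * oddBlock c := by
  ext i k
  set g : ZMod n → R := fun t => c (t - halfRep k) - c (t + halfRep k)
  have hg : g.Odd := fun t => by
    simp only [g, ← hc (-t - _), ← hc (-t + _)]
    ring_nf
  have hg0 : g 0 = 0 := by simp [g, ← hc (halfRep k)]
  calc (circulant c * oddMatrix R n) i k = g i := by
        simp [g, mul_apply, oddMatrix, mul_sub, Finset.sum_sub_distrib]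
    _ = (oddMatrix R n *ᵥ (g ∘ halfRep)) i := by rw [oddMatrix_mulVec_comp_halfRep hn hg hg0]
    _ = (oddMatrix R n * oddBlock c) i k := rfl

end OddFunctions

section EvenCirculant

variable (R : Type*) [CommRing R] (n : ℕ) [NeZero n]

def shiftDiff : Matrix (ZMod n) (ZMod n) R := circulant (Pi.single 1 1 - Pi.single (-1) 1)

/-- `shiftDiff` is a circulant, hence commutes with `circulant c`, and for odd `n` it maps the odd
functions onto the even functions of sum zero; so, with the constants and the odd functions,
these columns block-diagonalise `circulant c` for even `c`. -/
def circulantBasis : Matrix (ZMod n) (Unit ⊕ Fin (n / 2) ⊕ Fin (n / 2)) R :=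
  fromCols (of fun _ _ => 1) (fromCols (shiftDiff R n * oddMatrix R n) (oddMatrix R n))

variable {R n}

def circulantBlocks (c : ZMod n → R) :
    Matrix (Unit ⊕ Fin (n / 2) ⊕ Fin (n / 2)) (Unit ⊕ Fin (n / 2) ⊕ Fin (n / 2)) R :=
  fromBlocks (of fun _ _ => ∑ t, c t) 0 0 (fromBlocks (oddBlock c) 0 0 (oddBlock c))

theorem det_circulantBlocks (c : ZMod n → R) :
    (circulantBlocks c).det = (∑ t, c t) * (oddBlock c).det ^ 2 := by
  simp [circulantBlocks, det_fromBlocks_zero₂₁, sq]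

theorem shiftDiff_mulVec_apply (u : ZMod n → R) (i : ZMod n) :
    (shiftDiff R n *ᵥ u) i = u (i - 1) - u (i + 1) := by
  have hsub (a x : ZMod n) : i - x = a ↔ x = i - a := by
    rw [sub_eq_iff_eq_add, eq_sub_iff_add_eq, eq_comm, add_comm]
  simp [shiftDiff, mulVec, dotProduct, circulant_apply, Pi.single_apply, sub_mul,
    Finset.sum_sub_distrib, hsub]

theorem circulantBasis_mulVec_apply (v : Unit ⊕ Fin (n / 2) ⊕ Fin (n / 2) → R) (i : ZMod n) :
    (circulantBasis R n *ᵥ v) i = v (.inl ())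
      + ((oddMatrix R n *ᵥ (v ∘ Sum.inr ∘ Sum.inl)) (i - 1)
        - (oddMatrix R n *ᵥ (v ∘ Sum.inr ∘ Sum.inl)) (i + 1))
      + (oddMatrix R n *ᵥ (v ∘ Sum.inr ∘ Sum.inr)) i := by
  rw [circulantBasis, fromCols_mulVec, fromCols_mulVec, ← mulVec_mulVec]
  simp only [Pi.add_apply, shiftDiff_mulVec_apply, ← add_assoc]
  simp [mulVec, dotProduct, Function.comp_def]

variable (hn : Odd n)
include hn

theorem circulant_mul_circulantBasis {c : ZMod n → R} (hc : c.Even) :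
    circulant c * circulantBasis R n = circulantBasis R n * circulantBlocks c := by
  have hconst : circulant c * (of fun _ _ => 1 : Matrix (ZMod n) Unit R)
      = (of fun _ _ => 1 : Matrix (ZMod n) Unit R)
        * (of fun _ _ => ∑ t, c t : Matrix Unit Unit R) := by
    ext i
    simp [mul_apply, circulant_apply]
    exact Equiv.sum_comp (Equiv.subLeft i) c
  have hodd := circulant_mul_oddMatrix hn hc
  have hshift : circulant c * (shiftDiff R n * oddMatrix R n)
      = shiftDiff R n * oddMatrix R n * oddBlock c := by
    rw [← Matrix.mul_assoc, shiftDiff, circulant_mul_comm, Matrix.mul_assoc, hodd,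
      Matrix.mul_assoc]
  simp only [circulantBasis, circulantBlocks, mul_fromCols, fromCols_mul_fromBlocks,
    Matrix.mul_zero, add_zero, zero_add, hconst, hshift, hodd]

theorem circulantBasis_mulVec_injective [IsDomain R] [CharZero R]
    {v : Unit ⊕ Fin (n / 2) ⊕ Fin (n / 2) → R} (hv : circulantBasis R n *ᵥ v = 0) :
    v = 0 := by
  set α := v (.inl ())
  set u := oddMatrix R n *ᵥ (v ∘ Sum.inr ∘ Sum.inl)
  set w := oddMatrix R n *ᵥ (v ∘ Sum.inr ∘ Sum.inr)
  have hu : u.Odd := odd_oddMatrix_mulVec _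
  have hw : w.Odd := odd_oddMatrix_mulVec _
  have hrow (i : ZMod n) : α + (u (i - 1) - u (i + 1)) + w i = 0 := by
    rw [← circulantBasis_mulVec_apply, hv, Pi.zero_apply]
  -- the even and odd parts of `hrow` vanish separately
  have hw0 : w = 0 := by
    funext i
    have := hrow (-i)
    rw [show -i - 1 = -(i + 1) by ring, show -i + 1 = -(i - 1) by ring, hu, hu, hw] at this
    have h2 : (2 : R) * w i = 0 := by linear_combination hrow i - this
    simpa using h2
  have hα : α = 0 := by
    have hsum := Finset.sum_eq_zero fun i (_ : i ∈ Finset.univ) => hrow i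
    have hshift1 : ∑ i, u (i - 1) = ∑ i, u i := Equiv.sum_comp (Equiv.subRight 1) u
    have hshift2 : ∑ i, u (i + 1) = ∑ i, u i := Equiv.sum_comp (Equiv.addRight 1) u
    simp only [Finset.sum_add_distrib, Finset.sum_sub_distrib, hshift1, hshift2, hw0] at hsum
    simpa [ZMod.card, NeZero.ne n] using hsum
  have hu0 : u = 0 := by
    have hper : Function.Periodic u 2 := fun i => by
      have := hrow (i + 1)
      rw [hα, hw0, add_sub_cancel_right, show i + 1 + 1 = i + 2 by ring] at this
      simp only [zero_add, Pi.zero_apply, add_zero, sub_eq_zero] at this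
      exact this.symm
    funext i
    rw [apply_eq_apply_zero_of_periodic_two hn hper i]
    simp [u, mulVec, dotProduct, oddMatrix_zero_apply]
  funext x
  rcases x with _ | k | k
  · exact hα
  · simpa [u] using (oddMatrix_mulVec_halfRep hn _ k).symm.trans (congrFun hu0 _)
  · simpa [w] using (oddMatrix_mulVec_halfRep hn _ k).symm.trans (congrFun hw0 _)

theorem det_circulant_of_even [IsDomain R] [CharZero R] {c : ZMod n → R} (hc : c.Even) :
    (circulant c).det = (∑ t, c t) * (oddBlock c).det ^ 2 := by
  set e := halfEquiv hn
  set Q := (circulantBasis R n).submatrix e id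
  have hQ : (circulant c).submatrix e e * Q = Q * circulantBlocks c := by
    calc (circulant c).submatrix e e * Q = (circulant c * circulantBasis R n).submatrix e id :=
          submatrix_mul_equiv _ _ _ _ _
      _ = (circulantBasis R n * circulantBlocks c).submatrix e id := by
          rw [circulant_mul_circulantBasis hn hc]
      _ = Q * circulantBlocks c := by
          rw [submatrix_mul _ _ _ id _ Function.bijective_id, submatrix_id_id]
  have hQ0 : Q.det ≠ 0 := by
    intro h0
    obtain ⟨v, hv0, hv⟩ := exists_mulVec_eq_zero_iff.mpr h0
    refine hv0 (circulantBasis_mulVec_injective hn ?_)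
    funext t
    have : (circulantBasis R n *ᵥ v) (e (e.symm t)) = 0 := congrFun hv (e.symm t)
    rwa [e.apply_symm_apply] at this
  have := congrArg det hQ
  rw [det_mul, det_mul, det_submatrix_equiv_self, mul_comm Q.det] at this
  rw [mul_right_cancel₀ hQ0 this, det_circulantBlocks]

end EvenCirculant

section BlockDeterminant

variable {R : Type*} [CommRing R] {m : Type*} [Fintype m] [DecidableEq m]

theorem det_fromBlocks_neg_neg {l : Type*} [Fintype l] [DecidableEq l] (A : Matrix m m R)
    (B : Matrix m l R) (C : Matrix l m R) (D : Matrix l l R) :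
    (fromBlocks A (-B) (-C) D).det = (fromBlocks A B C D).det := by
  set J : Matrix (m ⊕ l) (m ⊕ l) R := fromBlocks 1 0 0 (-1)
  have hJJ : (J * J).det = 1 := by simp [J, fromBlocks_multiply]
  have hconj : J * fromBlocks A B C D * J = fromBlocks A (-B) (-C) D := by
    simp [J, fromBlocks_multiply]
  rw [← hconj, det_mul, det_mul, mul_right_comm, ← det_mul, hJJ, one_mul]

theorem sq_det_fromBlocks_transpose (A B : Matrix m m R) (hAB : Commute A Bᵀ) :
    (fromBlocks A Bᵀ B Aᵀ).det ^ 2 = (A * Aᵀ - Bᵀ * B).det * (Aᵀ * A - B * Bᵀ).det := by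
  have hBA : B * Aᵀ = Aᵀ * B := by simpa using congrArg transpose hAB.eq
  have hprod : fromBlocks A Bᵀ B Aᵀ * fromBlocks Aᵀ (-Bᵀ) (-B) A
      = fromBlocks (A * Aᵀ - Bᵀ * B) 0 0 (Aᵀ * A - B * Bᵀ) := by
    rw [fromBlocks_multiply]
    congr 1 <;> simp only [Matrix.mul_neg, hAB.eq, hBA] <;> abel
  have hdet : (fromBlocks Aᵀ (-Bᵀ) (-B) A).det = (fromBlocks A Bᵀ B Aᵀ).det := by
    rw [det_fromBlocks_neg_neg, ← det_transpose, fromBlocks_transpose, transpose_transpose,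
      transpose_transpose]
  rw [sq, ← det_fromBlocks_zero₂₁ _ (0 : Matrix m m R), ← hprod, det_mul, hdet]

end BlockDeterminant

section Dihedral

open DihedralGroup

variable {n : ℕ}

theorem groupMatrix_submatrix_equivSum {α : Type*} (x : DihedralGroup n → α) :
    (of fun g g' : DihedralGroup n => x (g * g'⁻¹)).submatrix equivSum.symm equivSum.symm
      = fromBlocks (circulant (x ∘ r)) (circulant (x ∘ sr))ᵀ (circulant (x ∘ sr))
          (circulant (x ∘ r))ᵀ := by
  ext (i | i) (j | j) <;> simp [circulant_apply, sub_eq_add_neg]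

variable [NeZero n] {R : Type*} [CommRing R]

def autocorr (a : ZMod n → R) (t : ZMod n) : R := ∑ j, a (t + j) * a j

theorem even_autocorr (a : ZMod n → R) : (autocorr a).Even := fun t =>
  Fintype.sum_equiv (Equiv.subRight t) _ _ fun j => by simp [mul_comm, neg_add_eq_sub]

theorem sum_autocorr (a : ZMod n → R) : ∑ t, autocorr a t = (∑ t, a t) ^ 2 := by
  calc ∑ t, autocorr a t = ∑ j, (∑ t, a (t + j)) * a j := by
        simp only [autocorr, Finset.sum_mul]
        exact Finset.sum_comm
    _ = (∑ t, a t) ^ 2 := by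
        rw [sq, Finset.mul_sum]
        exact Finset.sum_congr rfl fun j _ =>
          congrArg (· * a j) (Equiv.sum_comp (Equiv.addRight j) a)

theorem circulant_mul_transpose_self (a : ZMod n → R) :
    circulant a * (circulant a)ᵀ = circulant (autocorr a) := by
  ext i k
  simp only [mul_apply, transpose_apply, circulant_apply, autocorr]
  exact Fintype.sum_equiv (Equiv.subLeft k) _ _ fun j => by simp

def dihedralCorr (x : DihedralGroup n → R) : ZMod n → R :=
  autocorr (x ∘ r) - autocorr (x ∘ sr)

theorem even_dihedralCorr (x : DihedralGroup n → R) : (dihedralCorr x).Even := fun t => by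
  simp only [dihedralCorr, Pi.sub_apply, even_autocorr _ t]

theorem sum_dihedralCorr (x : DihedralGroup n → R) :
    ∑ t, dihedralCorr x t = (∑ i, x (r i)) ^ 2 - (∑ i, x (sr i)) ^ 2 := by
  simp [dihedralCorr, Finset.sum_sub_distrib, sum_autocorr]

theorem sq_det_groupMatrix (x : DihedralGroup n → R) :
    (of fun g g' : DihedralGroup n => x (g * g'⁻¹)).det ^ 2
      = (circulant (dihedralCorr x)).det ^ 2 := by
  have hcomm (a b : ZMod n → R) : Commute (circulant a) (circulant b)ᵀ := by
    rw [transpose_circulant]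
    exact circulant_mul_comm _ _
  have htranspose_mul (a : ZMod n → R) :
      (circulant a)ᵀ * circulant a = circulant (autocorr a) :=
    (hcomm a a).eq.symm.trans (circulant_mul_transpose_self a)
  rw [← det_submatrix_equiv_self equivSum.symm, groupMatrix_submatrix_equivSum,
    sq_det_fromBlocks_transpose _ _ (hcomm _ _), circulant_mul_transpose_self,
    circulant_mul_transpose_self, htranspose_mul, htranspose_mul, ← circulant_sub, sq,
    dihedralCorr]

end Dihedral

section ModThree

variable {n : ℕ} [NeZero n] (hn : Odd n)
include hn

theorem circulant_mulVec_addMonoidHom {R : Type*} [CommRing R] {c : ZMod n → R} (hc : c.Even)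
    (ψ : ZMod n →+ R) : circulant c *ᵥ ψ = (∑ t, c t) • ⇑ψ := by
  funext i
  have hodd : ∑ t, c t * ψ t = 0 :=
    sum_eq_zero_of_odd hn (hc.mul_odd fun t => map_neg ψ t) (by simp)
  calc (circulant c *ᵥ ψ) i = ∑ t, c t * ψ (i - t) := by
        simp only [mulVec, dotProduct, circulant_apply]
        exact Fintype.sum_equiv (Equiv.subLeft i) _ _ fun t => by simp
    _ = (∑ t, c t) * ψ i - ∑ t, c t * ψ t := by
        simp only [map_sub, mul_sub, Finset.sum_sub_distrib, Finset.sum_mul]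
    _ = ((∑ t, c t) • ⇑ψ) i := by simp [hodd]

/-- `ψ` is odd and `circulant c` multiplies it by `∑ c = 0`, so `ψ ∘ halfRep` is a nonzero
kernel vector of `oddBlock c`. -/
theorem det_oddBlock_eq_zero {K : Type*} [CommRing K] [IsDomain K] {c : ZMod n → K}
    (hc : c.Even) (hsum : ∑ t, c t = 0) (ψ : ZMod n →+ K) (hψ : ψ 1 ≠ 0) :
    (oddBlock c).det = 0 := by
  have hψodd : (⇑ψ).Odd := fun t => map_neg ψ t
  have hψ_eq := oddMatrix_mulVec_comp_halfRep hn hψodd (map_zero ψ)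
  refine exists_mulVec_eq_zero_iff.mp ⟨ψ ∘ halfRep, fun h0 => hψ ?_, ?_⟩
  · rw [← hψ_eq, h0, mulVec_zero, Pi.zero_apply]
  · have hker : oddMatrix K n *ᵥ (oddBlock c *ᵥ (ψ ∘ halfRep)) = 0 := by
      rw [mulVec_mulVec, ← circulant_mul_oddMatrix hn hc, ← mulVec_mulVec, hψ_eq,
        circulant_mulVec_addMonoidHom hn hc, hsum, zero_smul]
    funext k
    rw [← oddMatrix_mulVec_halfRep hn (oddBlock c *ᵥ (ψ ∘ halfRep)) k, hker, Pi.zero_apply,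
      Pi.zero_apply]

theorem three_dvd_det_oddBlock (h3 : 3 ∣ n) {c : ZMod n → ℤ} (hc : c.Even)
    (hsum : 3 ∣ ∑ t, c t) : 3 ∣ (oddBlock c).det := by
  suffices ((oddBlock c).det : ZMod 3) = 0 by
    exact_mod_cast (ZMod.intCast_zmod_eq_zero_iff_dvd _ 3).mp this
  have hsum3 : ((∑ t, c t : ℤ) : ZMod 3) = 0 :=
    (ZMod.intCast_zmod_eq_zero_iff_dvd _ 3).mpr (mod_cast hsum)
  rw [← eq_intCast (Int.castRingHom (ZMod 3)), RingHom.map_det]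
  convert det_oddBlock_eq_zero hn (c := (↑) ∘ c) (fun t => by simp [hc t])
    (by simpa using hsum3) (ZMod.castHom h3 (ZMod 3)).toAddMonoidHom
    (by simp [ZMod.cast_one h3]) using 2
  ext k j
  simp [oddBlock]

end ModThree

section LowerBound

open DihedralGroup

variable {n : ℕ} [NeZero n]

theorem abs_det_groupMatrix (hn : Odd n) (x : DihedralGroup n → ℤ) :
    |(of fun g g' : DihedralGroup n => x (g * g'⁻¹)).det|
      = |((∑ i, x (r i)) ^ 2 - (∑ i, x (sr i)) ^ 2) * (oddBlock (dihedralCorr x)).det ^ 2| := by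
  rw [← sq_eq_sq_iff_abs_eq_abs, sq_det_groupMatrix,
    det_circulant_of_even hn (even_dihedralCorr x), sum_dihedralCorr]

theorem four_dvd_of_two_dvd_sq_sub_sq_mul_sq {a b s : ℤ} (h : 2 ∣ (a ^ 2 - b ^ 2) * s ^ 2) :
    4 ∣ (a ^ 2 - b ^ 2) * s ^ 2 := by
  rcases Int.prime_two.dvd_mul.mp h with hab | hs
  · rw [sq_sub_sq] at hab ⊢
    -- `a + b` and `a - b` have the same parity
    have : 2 ∣ a + b ∧ 2 ∣ a - b := by
      rcases Int.prime_two.dvd_mul.mp hab with h' | h' <;> constructor <;> omega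
    exact dvd_mul_of_dvd_left (mul_dvd_mul this.1 this.2) _
  · exact dvd_mul_of_dvd_right (pow_dvd_pow_of_dvd (Int.prime_two.dvd_of_dvd_pow hs) 2) _

theorem four_le_abs_det_groupMatrix (hn : Odd n) (h3 : 3 ∣ n) (x : DihedralGroup n → ℤ)
    (h2 : 2 ≤ |(of fun g g' : DihedralGroup n => x (g * g'⁻¹)).det|) :
    4 ≤ |(of fun g g' : DihedralGroup n => x (g * g'⁻¹)).det| := by
  rw [abs_det_groupMatrix hn] at h2 ⊢
  set γ := (∑ i, x (r i)) ^ 2 - (∑ i, x (sr i)) ^ 2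
  set s := (oddBlock (dihedralCorr x)).det
  have hle {d : ℤ} (hdvd : d ∣ γ * s ^ 2) : d ≤ |γ * s ^ 2| :=
    Int.le_of_dvd (by omega) ((dvd_abs _ _).mpr hdvd)
  by_contra hlt
  obtain hD | hD : |γ * s ^ 2| = 2 ∨ |γ * s ^ 2| = 3 := by omega
  · have := hle (four_dvd_of_two_dvd_sq_sub_sq_mul_sq ((dvd_abs _ _).mp (by rw [hD])))
    omega
  · have h3s : 3 ∣ s := by
      rcases Int.prime_three.dvd_mul.mp ((dvd_abs _ _).mp (by rw [hD])) with hγ | hs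
      · exact three_dvd_det_oddBlock hn h3 (even_dihedralCorr x) (by rwa [sum_dihedralCorr])
      · exact Int.prime_three.dvd_of_dvd_pow hs
    have := hle (dvd_mul_of_dvd_right (pow_dvd_pow_of_dvd h3s 2) _)
    omega

end LowerBound

section Witness

open DihedralGroup

variable {n : ℕ}

/-- The vector `(1, 1, 0, …, 0)`, i.e. `δ_{r 0} + δ_{r 1}`. -/
def rotationPair : DihedralGroup n → ℤ
  | .r i => (if i = 0 then 1 else 0) + if i = 1 then 1 else 0
  | .sr _ => 0

def upperBidiagonal (h : ℕ) : Matrix (Fin h) (Fin h) ℤ :=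
  of fun k i => (if (i : ℕ) = k then 1 else 0) + if (i : ℕ) = k + 1 then 1 else 0

theorem det_upperBidiagonal (h : ℕ) : (upperBidiagonal h).det = 1 := by
  rw [det_of_isUpperTriangular]
  · exact Finset.prod_eq_one fun i _ => by simp [upperBidiagonal]
  · intro i j hij
    simp only [upperBidiagonal, of_apply]
    have : (j : ℕ) < i := hij
    rw [if_neg (by omega), if_neg (by omega), add_zero]

theorem sum_indicator_mul_indicator (h p q : ℕ) :
    ∑ i : Fin h, (if (i : ℕ) = p then (1 : ℤ) else 0) * (if (i : ℕ) = q then 1 else 0)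
      = if p = q ∧ p < h then 1 else 0 := by
  by_cases hp : p < h
  · rw [Finset.sum_eq_single ⟨p, hp⟩ (fun i _ hi => by simp [Fin.ext_iff.not.mp hi])
      (by simp)]
    simp [hp]
  · rw [Finset.sum_eq_zero fun i _ => by simp [show (i : ℕ) ≠ p by omega]]
    simp [hp]

theorem upperBidiagonal_mul_transpose_apply (h : ℕ) (k j : Fin h) :
    (upperBidiagonal h * (upperBidiagonal h)ᵀ) k j
      = (if (k : ℕ) = j then 1 else 0) + (if (k : ℕ) = j + 1 then 1 else 0)
        + (if (j : ℕ) = k + 1 then 1 else 0)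
        + (if (k : ℕ) = j ∧ (k : ℕ) + 1 < h then 1 else 0) := by
  simp only [mul_apply, transpose_apply, upperBidiagonal, of_apply, add_mul, mul_add,
    Finset.sum_add_distrib, sum_indicator_mul_indicator, k.isLt, and_true, add_left_inj]
  have hsucc : (k : ℕ) + 1 = j ∧ (k : ℕ) + 1 < h ↔ (j : ℕ) = k + 1 := by omega
  simp only [hsucc]
  ring

theorem rotationPair_r_intCast {u : ℤ} (h0 : |u| < n) (h1 : |u - 1| < n) :
    rotationPair (r (u : ZMod n)) = (if u = 0 then 1 else 0) + if u = 1 then 1 else 0 := by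
  have e0 := intCast_eq_intCast_iff_of_abs_sub_lt (n := n) (u := u) (v := 0) (by simpa using h0)
  have e1 := intCast_eq_intCast_iff_of_abs_sub_lt (n := n) (u := u) (v := 1) h1
  simp only [Int.cast_zero, Int.cast_one] at e0 e1
  simp only [rotationPair, e0, e1]

variable [NeZero n]

theorem dihedralCorr_rotationPair (t : ZMod n) :
    dihedralCorr rotationPair t = rotationPair (r t) + rotationPair (r (t + 1)) := by
  simp [dihedralCorr, autocorr, rotationPair, mul_add, Finset.sum_add_distrib]

theorem oddBlock_dihedralCorr_rotationPair (hn : Odd n) :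
    oddBlock (dihedralCorr (rotationPair (n := n)))
      = upperBidiagonal (n / 2) * (upperBidiagonal (n / 2))ᵀ := by
  ext k j
  have hn2 := Nat.odd_iff.mp hn
  have hk := k.isLt
  have hj := j.isLt
  have hsub : (halfRep k - halfRep j : ZMod n) = ((k - j : ℤ) : ZMod n) := by
    simp only [halfRep]
    push_cast
    ring
  -- integer representatives in `(-n, n)`, so that `rotationPair_r_intCast` applies
  have hadd : (halfRep k + halfRep j : ZMod n) = ((k + j + 2 - n : ℤ) : ZMod n) := by
    simp only [halfRep]
    push_cast
    rw [ZMod.natCast_self]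
    ring
  have hsucc (u : ℤ) : (u : ZMod n) + 1 = ((u + 1 : ℤ) : ZMod n) := by push_cast; rfl
  rw [upperBidiagonal_mul_transpose_apply, oddBlock, of_apply, dihedralCorr_rotationPair,
    dihedralCorr_rotationPair, hsub, hadd, hsucc, hsucc]
  simp (disch := rw [abs_lt]; omega) only [rotationPair_r_intCast]
  rcases (by omega : (k : ℕ) = j ∧ (k : ℕ) + 1 < n / 2 ∨ (k : ℕ) = j ∧ (k : ℕ) + 1 = n / 2 ∨
      (k : ℕ) = j + 1 ∨ (j : ℕ) = k + 1 ∨ (k : ℕ) + 1 < j ∨ (j : ℕ) + 1 < k)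
    with h | h | h | h | h | h <;>
  simp (disch := omega) only [if_pos, if_neg] <;> norm_num

theorem abs_det_groupMatrix_rotationPair (hn : Odd n) :
    |(of fun g g' : DihedralGroup n => rotationPair (g * g'⁻¹)).det| = 4 := by
  rw [abs_det_groupMatrix hn, oddBlock_dihedralCorr_rotationPair hn, det_mul, det_transpose,
    det_upperBidiagonal]
  simp [rotationPair, Finset.sum_add_distrib]

end Witness

end GroupDet

/-- `λ(D_{2n}) = 4` when `n = 3m` with `m` odd. -/
theorem stmt11 (n m : ℕ) [NeZero n] (hn : n = 3 * m) (hm : Odd m) :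
    IsLeast {d : ℤ | 2 ≤ d ∧ ∃ x : DihedralGroup n → ℤ,
      |Matrix.det (Matrix.of fun i j : DihedralGroup n => x (i * j⁻¹))| = d} 4 := by
  have hodd : Odd n := hn ▸ (by decide : Odd 3).mul hm
  refine ⟨⟨by norm_num, GroupDet.rotationPair,
    GroupDet.abs_det_groupMatrix_rotationPair hodd⟩, ?_⟩
  rintro d ⟨hd, x, rfl⟩
  exact GroupDet.four_le_abs_det_groupMatrix hodd ⟨m, hn⟩ x hd
end

section
/- The set of values of the integer group determinant of G = ℤ/2 × ℤ/2 is exactly {4m+1 : m ∈ ℤ} ∪ {16(2m+1) : m ∈ ℤ} ∪ {64m : m ∈ ℤ}. -/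
/-!
The determinant is the quartic form `(a+b+c+d)(a+b-c-d)(a-b+c-d)(a-b-c+d)` in the four
entries. If `a+b+c+d` is odd, all four factors are odd and their sum `4a` vanishes mod 4, so
an even number of them are `≡ 3 (mod 4)` and the product is `≡ 1 (mod 4)`. If `a+b+c+d = 2r`
is even, all four factors are even and the determinant is `16` times a product of four
integers with even sum `2a`; such a product is never `≡ 2 (mod 4)`, since exactly one even
factor would make the sum odd. Conversely, each of the three families is attained by a
one-parameter choice of entries.
-/

def kleinForm {R : Type*} [CommRing R] (a b c d : R) : R :=
  (a + b + c + d) * (a + b - c - d) * (a - b + c - d) * (a - b - c + d)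

def finFourEquivKlein : Fin 4 ≃ ZMod 2 × ZMod 2 where
  toFun := ![(0, 0), (1, 0), (0, 1), (1, 1)]
  invFun p := ⟨p.1.val + 2 * p.2.val, by
    have := ZMod.val_lt p.1; have := ZMod.val_lt p.2; omega⟩
  left_inv := by decide
  right_inv := by decide

theorem det_klein_eq_kleinForm (x : ZMod 2 × ZMod 2 → ℤ) :
    Matrix.det (Matrix.of fun i j : ZMod 2 × ZMod 2 => x (i - j)) =
      kleinForm (x (0, 0)) (x (1, 0)) (x (0, 1)) (x (1, 1)) := by
  rw [← Matrix.det_submatrix_equiv_self finFourEquivKlein]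
  have hM : (Matrix.of fun i j : ZMod 2 × ZMod 2 => x (i - j)).submatrix
      finFourEquivKlein finFourEquivKlein =
      !![x (0, 0), x (1, 0), x (0, 1), x (1, 1);
         x (1, 0), x (0, 0), x (1, 1), x (0, 1);
         x (0, 1), x (1, 1), x (0, 0), x (1, 0);
         x (1, 1), x (0, 1), x (1, 0), x (0, 0)] := by
    ext i j
    fin_cases i <;> fin_cases j <;> rfl
  rw [hM, kleinForm]
  simp [Matrix.det_succ_row_zero, Fin.sum_univ_succ, Fin.succAbove]
  ring

theorem exists_det_klein_eq_kleinForm (a b c d : ℤ) :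
    ∃ x : ZMod 2 × ZMod 2 → ℤ,
      Matrix.det (Matrix.of fun i j : ZMod 2 × ZMod 2 => x (i - j)) = kleinForm a b c d :=
  ⟨![a, b, c, d] ∘ finFourEquivKlein.symm, by rw [det_klein_eq_kleinForm]; rfl⟩

theorem ZMod.kleinForm_eq_one_of_add_eq (a b c d k : ZMod 4) (h : a + b + c + d = 2 * k + 1) :
    kleinForm a b c d = 1 := by
  revert a b c d k
  unfold kleinForm
  decide

@[simp, norm_cast]
theorem Int.cast_kleinForm {R : Type*} [CommRing R] (a b c d : ℤ) :
    ((kleinForm a b c d : ℤ) : R) = kleinForm (a : R) b c d := by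
  simp [kleinForm]

theorem ZMod.mul_ne_two_of_add_eq (y₁ y₂ y₃ y₄ k : ZMod 4) (h : y₁ + y₂ + y₃ + y₄ = 2 * k) :
    y₁ * y₂ * y₃ * y₄ ≠ 2 := by
  revert y₁ y₂ y₃ y₄ k
  decide

theorem kleinForm_emod_four_of_odd {a b c d : ℤ} (h : Odd (a + b + c + d)) :
    kleinForm a b c d % 4 = 1 := by
  obtain ⟨k, hk⟩ := h
  have hk4 : ((a + b + c + d : ℤ) : ZMod 4) = ((2 * k + 1 : ℤ) : ZMod 4) := congrArg _ hk
  push_cast at hk4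
  have h4 : ((kleinForm a b c d : ℤ) : ZMod 4) = ((1 : ℤ) : ZMod 4) := by
    push_cast
    exact ZMod.kleinForm_eq_one_of_add_eq _ _ _ _ _ hk4
  exact (ZMod.intCast_eq_intCast_iff' _ _ 4).mp h4

theorem Int.odd_or_four_dvd_mul_of_even_add {y₁ y₂ y₃ y₄ : ℤ} (h : Even (y₁ + y₂ + y₃ + y₄)) :
    Odd (y₁ * y₂ * y₃ * y₄) ∨ 4 ∣ y₁ * y₂ * y₃ * y₄ := by
  obtain ⟨k, hk⟩ := h
  have hk4 : ((y₁ + y₂ + y₃ + y₄ : ℤ) : ZMod 4) = ((2 * k : ℤ) : ZMod 4) :=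
    congrArg _ (hk.trans (two_mul k).symm)
  push_cast at hk4
  have hne : ((y₁ * y₂ * y₃ * y₄ : ℤ) : ZMod 4) ≠ ((2 : ℤ) : ZMod 4) := by
    push_cast
    exact ZMod.mul_ne_two_of_add_eq _ _ _ _ _ hk4
  rw [Ne, ZMod.intCast_eq_intCast_iff' _ _ 4] at hne
  rw [Int.odd_iff]
  omega

theorem kleinForm_eq_of_add_eq {a b c d r : ℤ} (h : a + b + c + d = 2 * r) :
    kleinForm a b c d = 16 * (r * (a + b - r) * (a + c - r) * (r - b - c)) := by
  rw [kleinForm, show d = 2 * r - a - b - c by omega]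
  ring

theorem kleinForm_trichotomy (a b c d : ℤ) :
    (∃ m : ℤ, kleinForm a b c d = 4 * m + 1) ∨ (∃ m : ℤ, kleinForm a b c d = 16 * (2 * m + 1)) ∨
      ∃ m : ℤ, kleinForm a b c d = 64 * m := by
  rcases Int.even_or_odd (a + b + c + d) with ⟨r, hr⟩ | hodd
  · rw [kleinForm_eq_of_add_eq (hr.trans (two_mul r).symm)]
    have hsum : Even (r + (a + b - r) + (a + c - r) + (r - b - c)) := ⟨a, by ring⟩
    rcases Int.odd_or_four_dvd_mul_of_even_add hsum with ⟨m, hm⟩ | ⟨m, hm⟩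
    · exact Or.inr (Or.inl ⟨m, by rw [hm]⟩)
    · exact Or.inr (Or.inr ⟨m, by rw [hm]; ring⟩)
  · have := kleinForm_emod_four_of_odd hodd
    exact Or.inl ⟨kleinForm a b c d / 4, by omega⟩

/-- The set of integer group determinant values of `ℤ/2 × ℤ/2` is exactly
`{4m+1} ∪ {16(2m+1)} ∪ {64m}`. -/
theorem stmt14 :
    {d : ℤ | ∃ x : ZMod 2 × ZMod 2 → ℤ,
        Matrix.det (Matrix.of fun i j : ZMod 2 × ZMod 2 => x (i - j)) = d} =
      {d : ℤ | ∃ m : ℤ, d = 4 * m + 1} ∪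
        {d : ℤ | ∃ m : ℤ, d = 16 * (2 * m + 1)} ∪
        {d : ℤ | ∃ m : ℤ, d = 64 * m} := by
  ext d
  simp only [Set.mem_ofPred_eq, Set.mem_union]
  constructor
  · rintro ⟨x, rfl⟩
    rw [det_klein_eq_kleinForm, or_assoc]
    exact kleinForm_trichotomy _ _ _ _
  · rintro ((⟨m, rfl⟩ | ⟨m, rfl⟩) | ⟨m, rfl⟩)
    · convert exists_det_klein_eq_kleinForm (m + 1) m m m using 3
      rw [kleinForm]; ring
    · convert exists_det_klein_eq_kleinForm (m + 2) (-m) (-m) m using 3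
      rw [kleinForm]; ring
    · convert exists_det_klein_eq_kleinForm (m + 2) (-m) (1 - m) (m - 1) using 3
      rw [kleinForm]; ring
end

section
/- Let p be an odd prime and α ≥ 1, and suppose p^α exactly divides n. Then |Res(Φ_{p^{α+1}}(x), x^n - 1)| = p^{p^α}. -/
open Polynomial

private lemma aux_prod_range_periodic {M : Type*} [CommMonoid M] (F : ℕ → M) (m : ℕ)
    (hF : ∀ j, F (j + m) = F j) (a : ℕ) :
    ∏ j ∈ Finset.range (a * m), F j = (∏ j ∈ Finset.range m, F j) ^ a := by
  have key : ∀ b j, F (j + b * m) = F j := by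
    intro b
    induction b with
    | zero => simp
    | succ b ih =>
      intro j
      rw [Nat.succ_mul, ← Nat.add_assoc, hF, ih]
  induction a with
  | zero => simp
  | succ a ih =>
    rw [Nat.succ_mul, Finset.prod_range_add, ih, pow_succ]
    congr 1
    refine Finset.prod_congr rfl fun k _ => ?_
    rw [Nat.add_comm (a * m) k, key]

private lemma aux_prod_cyclo_prime (p m : ℕ) (hp : p.Prime) (hm : 0 < m)
    (hco : Nat.Coprime p m) {η : ℂ} (hη : IsPrimitiveRoot η m) :
    ∏ k ∈ Finset.range m, (cyclotomic p ℂ).eval (η ^ k) = (p : ℂ) := by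
  haveI : Fact p.Prime := ⟨hp⟩
  have hpowmod : ∀ a : ℕ, η ^ (a % m) = η ^ a := by
    intro a
    rw [hη.eq_orderOf] at *
    exact pow_mod_orderOf η a
  -- split off the k = 0 term
  rw [Finset.range_eq_Ico, Finset.prod_eq_prod_Ico_succ_bot hm]
  rw [pow_zero, eval_one_cyclotomic_prime]
  -- now show the rest of the product is 1
  have hne : ∀ k ∈ Finset.Ico 1 m, η ^ k - 1 ≠ 0 := by
    intro k hk
    rw [Finset.mem_Ico] at hk
    intro h
    have h1 : η ^ k = 1 := by linear_combination h
    have := Nat.le_of_dvd (by omega) (hη.dvd_of_pow_eq_one k h1)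
    omega
  have hD : (∏ k ∈ Finset.Ico 1 m, (η ^ k - 1)) ≠ 0 := Finset.prod_ne_zero_iff.mpr hne
  have key : (∏ k ∈ Finset.Ico 1 m, (cyclotomic p ℂ).eval (η ^ k)) *
      (∏ k ∈ Finset.Ico 1 m, (η ^ k - 1)) = ∏ k ∈ Finset.Ico 1 m, (η ^ k - 1) := by
    rw [← Finset.prod_mul_distrib]
    have step : ∀ k, (cyclotomic p ℂ).eval (η ^ k) * (η ^ k - 1) = η ^ (k * p) - 1 := by
      intro k
      rw [cyclotomic_prime, eval_geom_sum, geom_sum_mul, ← pow_mul]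
    simp_rw [step]
    -- reindex via k ↦ k * p % m
    set c : ℕ := ((p : ZMod m)⁻¹).val with hc
    have hpc : p * c ≡ 1 [MOD m] := by
      rw [← ZMod.natCast_eq_natCast_iff]
      push_cast
      exact ZMod.mul_val_inv hco
    have hpc' : ∀ k : ℕ, (k * p * c) % m = k % m := by
      intro k
      have h1 : k * p * c ≡ k * 1 [MOD m] := by
        have := hpc.mul_left k
        rwa [← mul_assoc] at this
      rw [Nat.mul_one] at h1
      exact h1
    have hcco : Nat.Coprime c m := by
      have h1 : Nat.gcd (p * c) m = Nat.gcd 1 m := Nat.ModEq.gcd_eq hpc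
      have : Nat.Coprime (p * c) m := by
        rw [Nat.Coprime, h1]; exact Nat.gcd_one_left m
      exact Nat.Coprime.coprime_dvd_left ⟨p, mul_comm p c⟩ this
    have hmem : ∀ (d : ℕ), Nat.Coprime d m → ∀ k ∈ Finset.Ico 1 m,
        k * d % m ∈ Finset.Ico 1 m := by
      intro d hd k hk
      rw [Finset.mem_Ico] at hk ⊢
      refine ⟨?_, Nat.mod_lt _ hm⟩
      rcases Nat.eq_zero_or_pos (k * d % m) with h0 | h1
      · exfalso
        have hdvd : m ∣ k * d := Nat.dvd_of_mod_eq_zero h0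
        have : m ∣ k := (Nat.Coprime.dvd_of_dvd_mul_right
          ((Nat.coprime_comm).mp hd)) hdvd
        have := Nat.le_of_dvd (by omega) this
        omega
      · exact h1
    refine Finset.prod_nbij' (fun k => k * p % m) (fun k => k * c % m)
      (hmem p hco) (hmem c hcco) ?_ ?_ ?_
    · intro k hk
      rw [Finset.mem_Ico] at hk
      rw [Nat.mod_mul_mod, hpc', Nat.mod_eq_of_lt hk.2]
    · intro k hk
      rw [Finset.mem_Ico] at hk
      rw [Nat.mod_mul_mod]
      have : k * c * p = k * p * c := by ring
      rw [this, hpc', Nat.mod_eq_of_lt hk.2]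
    · intro k _
      rw [hpowmod (k * p)]
  have := mul_right_cancel₀ hD (key.trans (one_mul _).symm)
  rw [this, mul_one]

/-- For an odd prime `p` with `p^α ∥ n` (`α ≥ 1`), `|Res(Φ_{p^{α+1}}, x^n - 1)| = p^{p^α}`.
Since `x^n - 1` is monic with roots the `n`-th roots of unity, the resultant is (up to
sign) the product of `Φ_{p^{α+1}}` over all `n`-th roots of unity. -/
theorem stmt17 (p α n : ℕ) (hp : p.Prime) (hodd : Odd p) (hα : 1 ≤ α)
    (hdvd : p ^ α ∣ n) (hndvd : ¬ p ^ (α + 1) ∣ n) (hpos : 0 < n) :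
    ‖(∏ j ∈ Finset.range n,
        (cyclotomic (p ^ (α + 1)) ℂ).eval
          ((Complex.exp (2 * Real.pi * Complex.I / n)) ^ j))‖ = (p : ℝ) ^ (p ^ α) := by
  obtain ⟨m, hm⟩ := hdvd
  have hm0 : 0 < m := by
    rcases Nat.eq_zero_or_pos m with h | h
    · subst h; simp [hm] at hpos
    · exact h
  have hco : Nat.Coprime p m := by
    rw [hp.coprime_iff_not_dvd]
    intro hpm
    obtain ⟨t, ht⟩ := hpm
    exact hndvd ⟨t, by rw [hm, ht, pow_succ]; ring⟩
  haveI : Fact p.Prime := ⟨hp⟩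
  have hζ := Complex.isPrimitiveRoot_exp n hpos.ne'
  have hη : IsPrimitiveRoot ((Complex.exp (2 * Real.pi * Complex.I / n)) ^ p ^ α) m :=
    hζ.pow hpos hm
  have hfact : ∀ y : ℂ, (cyclotomic (p ^ (α + 1)) ℂ).eval y =
      (cyclotomic p ℂ).eval (y ^ p ^ α) := by
    intro y
    rw [cyclotomic_prime_pow_eq_geom_sum hp, cyclotomic_prime, eval_geom_sum, eval_finset_sum]
    simp [eval_pow]
  have hprod : (∏ j ∈ Finset.range n,
      (cyclotomic (p ^ (α + 1)) ℂ).eval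
        ((Complex.exp (2 * Real.pi * Complex.I / n)) ^ j)) = (p : ℂ) ^ p ^ α := by
    have h1 : ∀ j : ℕ, (cyclotomic (p ^ (α + 1)) ℂ).eval
        ((Complex.exp (2 * Real.pi * Complex.I / n)) ^ j) =
        (cyclotomic p ℂ).eval (((Complex.exp (2 * Real.pi * Complex.I / n)) ^ p ^ α) ^ j) := by
      intro j
      rw [hfact, ← pow_mul, ← pow_mul, Nat.mul_comm j (p ^ α)]
    rw [Finset.prod_congr rfl fun j _ => h1 j,
      show Finset.range n = Finset.range (p ^ α * m) by rw [hm],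
      aux_prod_range_periodic _ m (fun j => by
        congr 1
        rw [pow_add, hη.pow_eq_one, mul_one]) (p ^ α),
      aux_prod_cyclo_prime p m hp hm0 hco hη]
  rw [hprod, norm_pow, Complex.norm_natCast]
end

section
/- Let α ≥ 1 and let n be a positive integer with 2^α exactly dividing n. Then |Res(x^{2^α} + 1, x^n - 1)| = 2^{2^α}. -/
/-!
Write `n = 2^α m` with `m` odd and let `ζ` be a primitive `n`-th root of unity. Then `ζ^(2^α)`
is a primitive `m`-th root of unity `ω`, and `j ↦ ω^j + 1` has period `m`, so the product is
`(∏_{j<m} (ω^j + 1))^(2^α)`. Evaluating `X^m - 1 = ∏_{j<m} (X - ω^j)` at `-1` gives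
`∏_{j<m} (ω^j + 1) = 1 - (-1)^m = 2`.
-/

open Finset Polynomial

theorem Finset.prod_range_mul_of_periodic {M : Type*} [CommMonoid M] {f : ℕ → M} {m : ℕ}
    (hf : Function.Periodic f m) (q : ℕ) :
    ∏ j ∈ range (q * m), f j = (∏ j ∈ range m, f j) ^ q := by
  induction q with
  | zero => simp
  | succ q ih =>
    rw [Nat.succ_mul, prod_range_add, ih, pow_succ]
    congr 1
    refine prod_congr rfl fun j _ => ?_
    rw [add_comm]
    exact hf.nat_mul q j

namespace IsPrimitiveRoot

variable {R : Type*} [CommRing R] [IsDomain R]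

theorem prod_pow_add_one {ω : R} {m : ℕ} (hω : IsPrimitiveRoot ω m) (hm : 0 < m) :
    ∏ j ∈ range m, (ω ^ j + 1) = 1 - (-1) ^ m := by
  have h := congrArg (eval (-1)) (X_pow_sub_C_eq_prod hω hm (one_pow m))
  simp only [eval_sub, eval_pow, eval_X, eval_C, eval_prod, mul_one] at h
  have hneg : ∏ j ∈ range m, (-1 - ω ^ j) = (-1) ^ m * ∏ j ∈ range m, (ω ^ j + 1) :=
    calc ∏ j ∈ range m, (-1 - ω ^ j) = ∏ j ∈ range m, -(ω ^ j + 1) :=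
          prod_congr rfl fun j _ => by ring
      _ = _ := by rw [prod_neg, card_range]
  have hsq : ((-1 : R) ^ m) ^ 2 = 1 := by rw [← pow_mul, mul_comm, pow_mul, neg_one_sq, one_pow]
  rw [hneg] at h
  linear_combination (-(-1 : R) ^ m) * h + (1 - ∏ j ∈ range m, (ω ^ j + 1)) * hsq

theorem prod_pow_pow_add_one {ζ : R} {k m : ℕ} (hζ : IsPrimitiveRoot ζ (k * m)) (hm : 0 < m) :
    ∏ j ∈ range (k * m), ((ζ ^ j) ^ k + 1) = (1 - (-1) ^ m) ^ k := by
  obtain rfl | hk := k.eq_zero_or_pos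
  · simp
  have hω : IsPrimitiveRoot (ζ ^ k) m := hζ.pow (by positivity) rfl
  have hper : Function.Periodic (fun j => (ζ ^ k) ^ j + 1) m := fun j => by
    simp only [pow_add, hω.pow_eq_one, mul_one]
  calc ∏ j ∈ range (k * m), ((ζ ^ j) ^ k + 1) = ∏ j ∈ range (k * m), ((ζ ^ k) ^ j + 1) := by
        simp only [pow_right_comm]
    _ = (∏ j ∈ range m, ((ζ ^ k) ^ j + 1)) ^ k := prod_range_mul_of_periodic hper k
    _ = (1 - (-1) ^ m) ^ k := by rw [hω.prod_pow_add_one hm]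

end IsPrimitiveRoot

theorem stmt18_general (α n : ℕ) (hdvd : 2 ^ α ∣ n) (hndvd : ¬ 2 ^ (α + 1) ∣ n) :
    ‖(∏ j ∈ Finset.range n,
        (((Complex.exp (2 * Real.pi * Complex.I / n)) ^ j) ^ (2 ^ α) + 1))‖ =
      (2 : ℝ) ^ (2 ^ α) := by
  obtain ⟨m, rfl⟩ := hdvd
  have hm_odd : Odd m := by
    by_contra hm_even
    obtain ⟨c, rfl⟩ := Nat.not_odd_iff_even.1 hm_even
    exact hndvd ⟨c, by ring⟩
  have hζ := Complex.isPrimitiveRoot_exp (2 ^ α * m) (mul_ne_zero (by positivity) hm_odd.pos.ne')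
  rw [hζ.prod_pow_pow_add_one hm_odd.pos, hm_odd.neg_one_pow, norm_pow]
  norm_num

/-- For `α ≥ 1` and `2^α ∥ n`, `|Res(x^{2^α} + 1, x^n - 1)| = 2^{2^α}`. Since `x^n - 1`
is monic with roots the `n`-th roots of unity, the resultant is (up to sign) the product
of `x^{2^α} + 1` over all `n`-th roots of unity. -/
theorem stmt18 (α n : ℕ) (hα : 1 ≤ α) (hdvd : 2 ^ α ∣ n) (hndvd : ¬ 2 ^ (α + 1) ∣ n)
    (hpos : 0 < n) :
    ‖(∏ j ∈ Finset.range n,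
        (((Complex.exp (2 * Real.pi * Complex.I / n)) ^ j) ^ (2 ^ α) + 1))‖ =
      (2 : ℝ) ^ (2 ^ α) :=
  stmt18_general α n hdvd hndvd
end
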